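/- arXiv:2106.09591 — 11 statements merged into one kernel-verified Lean document; each statement's English description precedes it below -/
import Mathlib

section
/- Let f : ℝ → ℝ and x ∈ ℝ. Suppose that for every ε > 0 there exists δ > 0 such that for all h₁, h₂ ∈ (0, δ) one has |h₂·f(x+h₁) + h₁·f(x−h₂) − (h₁+h₂)·f(x)| ≤ ε·h₁·h₂. Then f is differentiable at x, i.e. there exists d ∈ ℝ such that f has derivative d at x. -/
/-!
The hypothesis says exactly that every right difference quotient `slope f x (x + h₁)` is
`ε`-close to every left one `slope f x (x - h₂)` once `h₁, h₂ < δ`. Two quotients on the same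
side are then `2ε`-close, compared through one on the other side, so the difference quotients
form a Cauchy filter along the punctured neighbourhood of `x` and converge in `ℝ`.
-/

open Filter Topology

theorem cauchy_map_sup_of_eventually_dist_lt {ι α : Type*} [PseudoMetricSpace α]
    {l₁ l₂ : Filter ι} [l₁.NeBot] [l₂.NeBot] {g : ι → α}
    (h : ∀ ε > 0, ∀ᶠ p in l₁ ×ˢ l₂, dist (g p.1) (g p.2) < ε) :
    Cauchy (map g (l₁ ⊔ l₂)) := by
  refine Metric.cauchy_iff.2 ⟨map_neBot, fun ε hε => ?_⟩
  obtain ⟨S₁, hS₁, S₂, hS₂, hS⟩ := mem_prod_iff.1 (h (ε / 2) (half_pos hε))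
  have close {a b : ι} (ha : a ∈ S₁) (hb : b ∈ S₂) : dist (g a) (g b) < ε / 2 :=
    hS (Set.mk_mem_prod ha hb)
  obtain ⟨c₁, hc₁⟩ := nonempty_of_mem hS₁
  obtain ⟨c₂, hc₂⟩ := nonempty_of_mem hS₂
  refine ⟨g '' (S₁ ∪ S₂), image_mem_map (union_mem_sup hS₁ hS₂), ?_⟩
  rintro _ ⟨a, ha | ha, rfl⟩ _ ⟨b, hb | hb, rfl⟩
  · calc dist (g a) (g b) ≤ dist (g a) (g c₂) + dist (g b) (g c₂) := dist_triangle_right _ _ _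
      _ < ε := by linarith [close ha hc₂, close hb hc₂]
  · linarith [close ha hb]
  · linarith [close hb ha, dist_comm (g a) (g b)]
  · calc dist (g a) (g b) ≤ dist (g c₁) (g a) + dist (g c₁) (g b) := dist_triangle_left _ _ _
      _ < ε := by linarith [close hc₁ ha, close hc₁ hb]

theorem slope_add_sub_slope_sub (f : ℝ → ℝ) (x : ℝ) {h₁ h₂ : ℝ} (h₁0 : h₁ ≠ 0) (h₂0 : h₂ ≠ 0) :
    slope f x (x + h₁) - slope f x (x - h₂) =
      (h₂ * f (x + h₁) + h₁ * f (x - h₂) - (h₁ + h₂) * f x) / (h₁ * h₂) := by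
  simp only [slope_def_field, add_sub_cancel_left, sub_sub_cancel_left]
  field_simp
  ring

theorem abs_slope_add_sub_slope_sub_le (f : ℝ → ℝ) {x ε h₁ h₂ : ℝ} (h₁0 : 0 < h₁) (h₂0 : 0 < h₂)
    (H : |h₂ * f (x + h₁) + h₁ * f (x - h₂) - (h₁ + h₂) * f x| ≤ ε * h₁ * h₂) :
    |slope f x (x + h₁) - slope f x (x - h₂)| ≤ ε := by
  rw [slope_add_sub_slope_sub f x h₁0.ne' h₂0.ne', abs_div, abs_of_pos (mul_pos h₁0 h₂0),
    div_le_iff₀ (mul_pos h₁0 h₂0), ← mul_assoc]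
  exact H

/-- Differentiability criterion (2.14): the symmetric second-order difference bound
implies differentiability at `x`. -/
theorem diff_criterion_of_second_order_difference
    (f : ℝ → ℝ) (x : ℝ)
    (hyp : ∀ ε > (0:ℝ), ∃ δ > (0:ℝ), ∀ h₁ h₂ : ℝ,
      h₁ ∈ Set.Ioo 0 δ → h₂ ∈ Set.Ioo 0 δ →
      |h₂ * f (x + h₁) + h₁ * f (x - h₂) - (h₁ + h₂) * f x| ≤ ε * h₁ * h₂) :
    ∃ d : ℝ, HasDerivAt f d x := by
  have hslope : ∀ ε > 0, ∀ᶠ p in 𝓝[<] x ×ˢ 𝓝[>] x,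
      dist (slope f x p.1) (slope f x p.2) < ε := by
    intro ε hε
    obtain ⟨δ, hδ, H⟩ := hyp (ε / 2) (half_pos hε)
    filter_upwards [prod_mem_prod (Ioo_mem_nhdsLT (sub_lt_self x hδ))
      (Ioo_mem_nhdsGT (lt_add_of_pos_right x hδ))] with ⟨a, b⟩ ⟨⟨ha₁, ha₂⟩, hb₁, hb₂⟩
    have hb : b - x ∈ Set.Ioo 0 δ := ⟨by linarith, by linarith⟩
    have ha : x - a ∈ Set.Ioo 0 δ := ⟨by linarith, by linarith⟩
    have hab := abs_slope_add_sub_slope_sub_le f hb.1 ha.1 (H _ _ hb ha)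
    rw [add_sub_cancel, sub_sub_cancel] at hab
    rw [dist_comm, Real.dist_eq]
    linarith
  obtain ⟨d, hd⟩ := CompleteSpace.complete
    (nhdsLT_sup_nhdsGT x ▸ cauchy_map_sup_of_eventually_dist_lt hslope)
  exact ⟨d, hasDerivAt_iff_tendsto_slope.2 hd⟩
end

section
/- Let f : ℝ → ℝ and x ∈ ℝ. If f is differentiable at x, then for every ε > 0 there exists δ > 0 such that for all h₁, h₂ ∈ (0, δ) one has |h₂·f(x+h₁) + h₁·f(x−h₂) − (h₁+h₂)·f(x)| ≤ ε·h₁·h₂. -/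
/-! Subtract the tangent line: with `d = f' x`, the second-order difference equals
`h₂ (f (x + h₁) - f x - h₁ d) + h₁ (f (x - h₂) - f x + h₂ d)`, the linear terms `± h₁ h₂ d`
cancelling, and each bracket is `o(h)` by differentiability. -/

theorem HasDerivAt.exists_norm_remainder_le {𝕜 F : Type*} [NontriviallyNormedField 𝕜]
    [NormedAddCommGroup F] [NormedSpace 𝕜 F] {f : 𝕜 → F} {d : F} {x : 𝕜}
    (hf : HasDerivAt f d x) {ε : ℝ} (hε : 0 < ε) :
    ∃ δ > 0, ∀ h : 𝕜, ‖h‖ < δ → ‖f (x + h) - f x - h • d‖ ≤ ε * ‖h‖ := by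
  obtain ⟨δ, hδ, hball⟩ :=
    Metric.eventually_nhds_iff.mp ((hasDerivAt_iff_isLittleO.mp hf).def hε)
  refine ⟨δ, hδ, fun h hh => ?_⟩
  simpa using hball (y := x + h) (by simpa [dist_eq_norm] using hh)

theorem second_order_difference_eq_tangent_remainders {R : Type*} [CommRing R] (f : R → R)
    (x d h₁ h₂ : R) :
    h₂ * f (x + h₁) + h₁ * f (x - h₂) - (h₁ + h₂) * f x =
      h₂ * (f (x + h₁) - f x - h₁ * d) + h₁ * (f (x + -h₂) - f x - -h₂ * d) := by
  rw [← sub_eq_add_neg]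
  ring

/-- Converse direction of the differentiability criterion (2.14): if `f` is differentiable
at `x`, then the symmetric second-order difference is `o(h₁ h₂)`. -/
theorem second_order_difference_of_differentiable
    (f : ℝ → ℝ) (x : ℝ) (hf : ∃ d : ℝ, HasDerivAt f d x) :
    ∀ ε > (0:ℝ), ∃ δ > (0:ℝ), ∀ h₁ h₂ : ℝ,
      h₁ ∈ Set.Ioo 0 δ → h₂ ∈ Set.Ioo 0 δ →
      |h₂ * f (x + h₁) + h₁ * f (x - h₂) - (h₁ + h₂) * f x| ≤ ε * h₁ * h₂ := by
  intro ε hε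
  obtain ⟨d, hd⟩ := hf
  obtain ⟨δ, hδ, hrem⟩ := hd.exists_norm_remainder_le (half_pos hε)
  refine ⟨δ, hδ, fun h₁ h₂ ⟨h₁_pos, h₁_lt⟩ ⟨h₂_pos, h₂_lt⟩ => ?_⟩
  have hr₁ : |f (x + h₁) - f x - h₁ * d| ≤ ε / 2 * h₁ := by
    simpa [abs_of_pos h₁_pos] using hrem h₁ (by simpa [abs_of_pos h₁_pos])
  have hr₂ : |f (x + -h₂) - f x - -h₂ * d| ≤ ε / 2 * h₂ := by
    simpa [abs_of_pos h₂_pos] using hrem (-h₂) (by simpa [abs_of_pos h₂_pos])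
  rw [second_order_difference_eq_tangent_remainders f x d]
  calc _ ≤ |h₂ * (f (x + h₁) - f x - h₁ * d)| + |h₁ * (f (x + -h₂) - f x - -h₂ * d)| :=
        abs_add_le _ _
    _ ≤ h₂ * (ε / 2 * h₁) + h₁ * (ε / 2 * h₂) := by
        rw [abs_mul, abs_mul, abs_of_pos h₂_pos, abs_of_pos h₁_pos]
        gcongr
    _ = ε * h₁ * h₂ := by ring
end

section
/- Let f : ℝ → ℝ with f(0) = 0, let K > 0, ε > 0 and ε' ∈ (0,1), and suppose that for all h₁, h₂ ∈ (0, ε) one has |h₁·f(h₂) + h₂·f(−h₁)| ≤ K·h₁·h₂·(h₁+h₂)^{1−ε'}. Then f is differentiable at 0, and moreover |f(h) − f'(0)·h| ≤ K·|h|^{2−ε'} for all h with 0 < |h| < ε. -/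
/-!
Dividing (2.15) by `h₁ h₂` says that the slopes `S x = f x / x` satisfy
`|S x - S y| ≤ K (|x| + |y|) ^ (1 - ε')` whenever `x` and `y` lie on opposite sides of `0`.
Comparing two points on the same side through a third one on the other side gives the same
bound with `2 K` for all pairs, so `S` is Cauchy at `0`; its limit `d` is `f' 0`. Letting `y → 0`
from the side opposite to `h` then gives `|S h - d| ≤ K |h| ^ (1 - ε')`, the quantitative bound.
-/

open Filter Topology

def HolderAcrossZero {E : Type*} [NormedAddCommGroup E] (g : ℝ → E) (K c ε : ℝ) : Prop :=
  ∀ x y : ℝ, x * y < 0 → |x| < ε → |y| < ε → ‖g x - g y‖ ≤ K * (|x| + |y|) ^ c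

namespace HolderAcrossZero

variable {E : Type*} [NormedAddCommGroup E] {g : ℝ → E} {K c ε : ℝ}

theorem of_pos_neg
    (H : ∀ x t : ℝ, 0 < x → x < ε → 0 < t → t < ε →
      ‖g x - g (-t)‖ ≤ K * (x + t) ^ c) :
    HolderAcrossZero g K c ε := by
  intro x y hxy hx hy
  rcases mul_neg_iff.1 hxy with ⟨hx0, hy0⟩ | ⟨hx0, hy0⟩
  · rw [abs_of_pos hx0, abs_of_neg hy0] at *
    simpa using H x (-y) hx0 hx (neg_pos.2 hy0) hy
  · rw [abs_of_neg hx0, abs_of_pos hy0] at *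
    rw [norm_sub_rev, add_comm]
    simpa using H y (-x) hy0 hy (neg_pos.2 hx0) hx

theorem norm_sub_le (H : HolderAcrossZero g K c ε) (hK : 0 ≤ K) (hc : 0 ≤ c) {x y : ℝ}
    (hx0 : x ≠ 0) (hy0 : y ≠ 0) (hx : |x| < ε) (hy : |y| < ε) :
    ‖g x - g y‖ ≤ 2 * K * (|x| + |y|) ^ c := by
  wlog hyx : |y| ≤ |x| generalizing x y
  · rw [norm_sub_rev, add_comm]
    exact this hy0 hx0 hy hx (le_of_not_ge hyx)
  have hpow : 0 ≤ K * (|x| + |y|) ^ c := by positivity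
  rcases lt_or_ge (x * y) 0 with hneg | hpos
  · linarith [H x y hneg hx hy]
  have hxy' : x * -y < 0 := by
    rw [mul_neg, neg_lt_zero]; exact lt_of_le_of_ne hpos (mul_ne_zero hx0 hy0).symm
  have hyy : -y * y < 0 := by nlinarith [mul_self_pos.2 hy0]
  have h₁ := H x (-y) hxy' hx (by rwa [abs_neg])
  have h₂ := H (-y) y hyy (by rwa [abs_neg]) hy
  rw [abs_neg] at h₁ h₂
  have h₃ : K * (|y| + |y|) ^ c ≤ K * (|x| + |y|) ^ c := by gcongr
  calc ‖g x - g y‖ ≤ ‖g x - g (-y)‖ + ‖g (-y) - g y‖ :=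
        norm_sub_le_norm_sub_add_norm_sub _ _ _
    _ ≤ 2 * K * (|x| + |y|) ^ c := by linarith

theorem exists_tendsto [CompleteSpace E] (H : HolderAcrossZero g K c ε) (hK : 0 ≤ K)
    (hc : 0 < c) (hε : 0 < ε) : ∃ d, Tendsto g (𝓝[≠] 0) (𝓝 d) := by
  refine cauchy_map_iff_exists_tendsto.1 (cauchy_map_iff.2 ⟨inferInstance, ?_⟩)
  rw [tendsto_uniformity_iff_dist_tendsto_zero]
  have hlim : Tendsto (fun p : ℝ × ℝ => 2 * K * (|p.1| + |p.2|) ^ c)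
      (𝓝[≠] 0 ×ˢ 𝓝[≠] 0) (𝓝 0) := by
    have hcont : Continuous (fun p : ℝ × ℝ => 2 * K * (|p.1| + |p.2|) ^ c) :=
      continuous_const.mul (((continuous_abs.comp continuous_fst).add
        (continuous_abs.comp continuous_snd)).rpow_const fun _ => Or.inr hc.le)
    have h00 := hcont.tendsto (0, 0)
    rw [nhds_prod_eq] at h00
    simpa [Real.zero_rpow hc.ne'] using
      h00.mono_left (prod_mono nhdsWithin_le_nhds nhdsWithin_le_nhds)
  refine squeeze_zero' (Eventually.of_forall fun _ => dist_nonneg) ?_ hlim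
  have hnear : ∀ᶠ x in 𝓝[≠] (0 : ℝ), x ≠ 0 ∧ |x| < ε :=
    eventually_mem_nhdsWithin.and
      (by simpa using (eventually_abs_sub_lt 0 hε).filter_mono nhdsWithin_le_nhds)
  filter_upwards [hnear.prod_mk hnear] with ⟨x, y⟩ ⟨⟨hx0, hx⟩, hy0, hy⟩
  rw [dist_eq_norm]
  exact H.norm_sub_le hK hc.le hx0 hy0 hx hy

theorem norm_sub_le_of_tendsto (H : HolderAcrossZero g K c ε) {d : E}
    (hd : Tendsto g (𝓝[≠] 0) (𝓝 d)) {h : ℝ} (hh : h ≠ 0) (hhε : |h| < ε) :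
    ‖g h - d‖ ≤ K * |h| ^ c := by
  have hopp : Tendsto (fun t : ℝ => -t * h) (𝓝[>] 0) (𝓝[≠] 0) := by
    refine tendsto_nhdsWithin_iff.2 ⟨?_, ?_⟩
    · have h00 := (continuous_neg.mul continuous_const).tendsto (0 : ℝ) (f := fun t => -t * h)
      simpa using h00.mono_left nhdsWithin_le_nhds
    · filter_upwards [self_mem_nhdsWithin] with t (ht : 0 < t)
      exact mul_ne_zero (neg_ne_zero.2 ht.ne') hh
  have hL : Tendsto (fun t => ‖g h - g (-t * h)‖) (𝓝[>] 0) (𝓝 ‖g h - d‖) :=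
    (tendsto_const_nhds.sub (hd.comp hopp)).norm
  have hR : Tendsto (fun t : ℝ => K * (|h| + |-t * h|) ^ c) (𝓝[>] 0) (𝓝 (K * |h| ^ c)) := by
    have hcont : Continuous (fun t : ℝ => K * (|h| + |-t * h|) ^ c) :=
      continuous_const.mul
        ((continuous_const.add (continuous_neg.mul continuous_const).abs).rpow_const
          fun _ => Or.inl (add_pos_of_pos_of_nonneg (abs_pos.2 hh) (abs_nonneg _)).ne')
    simpa using (hcont.tendsto 0).mono_left nhdsWithin_le_nhds
  refine le_of_tendsto_of_tendsto hL hR ?_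
  filter_upwards [Ioo_mem_nhdsGT one_pos] with t ⟨ht0, ht1⟩
  refine H h (-t * h) (by nlinarith [mul_self_pos.2 hh]) hhε ?_
  rw [abs_mul, abs_neg, abs_of_pos ht0]
  nlinarith [abs_nonneg h]

end HolderAcrossZero

theorem holderAcrossZero_slope {f : ℝ → ℝ} {K c ε : ℝ} (hf0 : f 0 = 0)
    (hyp : ∀ h₁ h₂ : ℝ, h₁ ∈ Set.Ioo 0 ε → h₂ ∈ Set.Ioo 0 ε →
      |h₁ * f h₂ + h₂ * f (-h₁)| ≤ K * h₁ * h₂ * (h₁ + h₂) ^ c) :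
    HolderAcrossZero (slope f 0) K c ε := by
  refine HolderAcrossZero.of_pos_neg fun x t hx hxε ht htε => ?_
  have hdiff : slope f 0 x - slope f 0 (-t) = (t * f x + x * f (-t)) / (t * x) := by
    simp only [slope_def_field, hf0, sub_zero]
    field_simp
    ring
  rw [Real.norm_eq_abs, hdiff, abs_div, abs_of_pos (mul_pos ht hx), div_le_iff₀ (mul_pos ht hx)]
  calc _ ≤ K * t * x * (t + x) ^ c := hyp t x ⟨ht, htε⟩ ⟨hx, hxε⟩
    _ = K * (x + t) ^ c * (t * x) := by rw [add_comm]; ring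

/-- Quantitative differentiability criterion: condition (2.15) implies differentiability
at `0` together with the quantitative bound `|f h - f'(0) h| ≤ K |h|^(2-ε')`. -/
theorem quantitative_diff_criterion
    (f : ℝ → ℝ) (hf0 : f 0 = 0) (K ε ε' : ℝ)
    (hK : 0 < K) (hε : 0 < ε) (hε' : ε' ∈ Set.Ioo (0:ℝ) 1)
    (hyp : ∀ h₁ h₂ : ℝ, h₁ ∈ Set.Ioo 0 ε → h₂ ∈ Set.Ioo 0 ε →
      |h₁ * f h₂ + h₂ * f (-h₁)| ≤ K * h₁ * h₂ * (h₁ + h₂) ^ (1 - ε')) :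
    ∃ d : ℝ, HasDerivAt f d 0 ∧
      ∀ h : ℝ, 0 < |h| → |h| < ε → |f h - d * h| ≤ K * |h| ^ (2 - ε') := by
  have H := holderAcrossZero_slope hf0 hyp
  obtain ⟨d, hd⟩ := H.exists_tendsto hK.le (sub_pos.2 hε'.2) hε
  refine ⟨d, hasDerivAt_iff_tendsto_slope.2 hd, fun h h0 hhε => ?_⟩
  have hh : h ≠ 0 := abs_pos.1 h0
  calc |f h - d * h| = |h| * |slope f 0 h - d| := by
        rw [← abs_mul, slope_def_field, hf0, sub_zero, sub_zero, mul_sub, mul_div_cancel₀ _ hh,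
          mul_comm]
    _ ≤ |h| * (K * |h| ^ (1 - ε')) := by gcongr; exact H.norm_sub_le_of_tendsto hd hh hhε
    _ = K * |h| ^ (2 - ε') := by
        rw [show 2 - ε' = 1 + (1 - ε') by ring,
          Real.rpow_one_add' (abs_nonneg h) (by linarith [hε'.2])]
        ring
end

section
/- Let ε' ∈ (0,1), C ≥ 1, c ∈ ℝ and ε > 0. Let ψ, θ : ℝ → ℝ satisfy, for all h with |h| ≤ ε: |ψ(h) − h/2| ≤ C·h², |θ(h)| ≤ C·|h|, and |θ(ψ(h)) − (1/4)·θ(h) − c·h| ≤ C·h². Then there exist K₀ ≥ 1 and ε̃ ∈ (0, ε] such that for every K ≥ K₀ and all h₁, h₂ ∈ (0, ε̃), setting h̃₁ := −ψ(−h₁) and h̃₂ := ψ(h₂) (which satisfy 0 < h̃ᵢ < hᵢ), the following implication holds: if |h₁·θ(h₂) + h₂·θ(−h₁)| ≤ K·h₁·h₂·(h₁+h₂)^{1−ε'}, then |h̃₁·θ(h̃₂) + h̃₂·θ(−h̃₁)| ≤ K·h̃₁·h̃₂·(h̃₁+h̃₂)^{1−ε'}. -/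
/-!
Write a = -ψ(-h₁) ≈ h₁/2 and b = ψ(h₂) ≈ h₂/2. Expanding with the slope law,
a θ(b) + b θ(-a) = (h₁ θ(h₂) + h₂ θ(-h₁)) / 8 + O(h₁ h₂ (h₁ + h₂)):
the cross term contracts by the factor 1/8, while the scale h₁ h₂ (h₁ + h₂)^(1-ε') contracts
only by about (1/2)^(3-ε') = 2^ε' / 8. The gain 2^ε' > 1 absorbs the error term, which is
O(h₁ h₂ (h₁ + h₂)^(1-ε')) for h₁ + h₂ ≤ 1, once K is large and h₁, h₂ are small.
-/

open Real

noncomputable def secondOrderScale (p x y : ℝ) : ℝ := x * y * (x + y) ^ p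

section secondOrderScale

variable {p x y x' y' : ℝ}

lemma secondOrderScale_nonneg (hx : 0 ≤ x) (hy : 0 ≤ y) : 0 ≤ secondOrderScale p x y := by
  unfold secondOrderScale; positivity

lemma secondOrderScale_mono (hp : 0 ≤ p) (hx : 0 ≤ x) (hy : 0 ≤ y) (hxx' : x ≤ x')
    (hyy' : y ≤ y') : secondOrderScale p x y ≤ secondOrderScale p x' y' := by
  have hx' := hx.trans hxx'
  have hy' := hy.trans hyy'
  exact mul_le_mul (mul_le_mul hxx' hyy' hy hx')
    (rpow_le_rpow (add_nonneg hx hy) (add_le_add hxx' hyy') hp) (by positivity)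
    (mul_nonneg hx' hy')

lemma secondOrderScale_mul {t : ℝ} (ht : 0 ≤ t) (hx : 0 ≤ x) (hy : 0 ≤ y) :
    secondOrderScale p (t * x) (t * y) = t ^ 2 * t ^ p * secondOrderScale p x y := by
  unfold secondOrderScale
  rw [← mul_add, mul_rpow ht (by linarith)]
  ring

lemma mul_mul_add_le_secondOrderScale (hx : 0 ≤ x) (hy : 0 ≤ y) (hxy : x + y ≤ 1) (hp : p ≤ 1) :
    x * y * (x + y) ≤ secondOrderScale p x y :=
  mul_le_mul_of_nonneg_left (self_le_rpow_of_le_one (by linarith) hxy hp) (mul_nonneg hx hy)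

end secondOrderScale

lemma mul_rpow_le_mul_rpow_of_le_one {t x q : ℝ} (ht0 : 0 ≤ t) (ht1 : t ≤ 1) (hx : 0 ≤ x)
    (hq : q ≤ 1) : t * x ^ q ≤ (t * x) ^ q := by
  rw [mul_rpow ht0 hx]
  exact mul_le_mul_of_nonneg_right (self_le_rpow_of_le_one ht0 ht1 hq) (rpow_nonneg hx _)

lemma half_rpow_one_sub (s : ℝ) : (1 / 2 : ℝ) ^ (1 - s) = 2 ^ s / 2 := by
  rw [one_div, inv_rpow zero_le_two, rpow_sub zero_lt_two, rpow_one, inv_div]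

lemma secondOrderScale_le_of_half_mul_le {s δ x y x' y' : ℝ} (hs0 : 0 ≤ s) (hs1 : s ≤ 1)
    (hδ0 : 0 ≤ δ) (hδ1 : δ ≤ 1) (hx : 0 ≤ x) (hy : 0 ≤ y)
    (hxx' : (1 - δ) / 2 * x ≤ x') (hyy' : (1 - δ) / 2 * y ≤ y') :
    (1 - δ) ^ 3 * 2 ^ s / 8 * secondOrderScale (1 - s) x y ≤ secondOrderScale (1 - s) x' y' := by
  have hκ : 0 ≤ (1 - δ) / 2 := by linarith
  have hpow : (1 - δ) * (2 ^ s / 2) ≤ ((1 - δ) / 2) ^ (1 - s) := by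
    rw [← half_rpow_one_sub, div_eq_mul_one_div (1 - δ)]
    exact mul_rpow_le_mul_rpow_of_le_one (by linarith) (by linarith) (by norm_num) (by linarith)
  calc (1 - δ) ^ 3 * 2 ^ s / 8 * secondOrderScale (1 - s) x y
      = ((1 - δ) / 2) ^ 2 * ((1 - δ) * (2 ^ s / 2)) * secondOrderScale (1 - s) x y := by ring
    _ ≤ ((1 - δ) / 2) ^ 2 * ((1 - δ) / 2) ^ (1 - s) * secondOrderScale (1 - s) x y := by
      gcongr
      exact secondOrderScale_nonneg hx hy
    _ = secondOrderScale (1 - s) ((1 - δ) / 2 * x) ((1 - δ) / 2 * y) :=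
      (secondOrderScale_mul hκ hx hy).symm
    _ ≤ secondOrderScale (1 - s) x' y' :=
      secondOrderScale_mono (by linarith) (mul_nonneg hκ hx) (mul_nonneg hκ hy) hxx' hyy'

lemma one_add_half_le_cube_mul {γ : ℝ} (h0 : 0 ≤ γ) (h1 : γ ≤ 1) :
    1 + γ / 2 ≤ (1 - γ / 12) ^ 3 * (1 + γ) := by
  nlinarith [mul_nonneg h0 (sub_nonneg.2 h1), mul_nonneg (pow_nonneg h0 3) (sub_nonneg.2 h1),
    pow_nonneg h0 3]

lemma half_mul_le_and_lt_of_abs_sub_half_le {a h C δ : ℝ} (hh : 0 < h) (hδ : δ < 1)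
    (hCh : 2 * C * h ≤ δ) (ha : |a - h / 2| ≤ C * h ^ 2) : (1 - δ) / 2 * h ≤ a ∧ a < h := by
  have hsq : 2 * (C * h ^ 2) ≤ δ * h := by nlinarith
  constructor <;> nlinarith [abs_le.mp ha]

lemma abs_cross_term_sub_le {θ : ℝ → ℝ} {C c a b h₁ h₂ : ℝ}
    (ha : 0 ≤ a) (ha₁ : a ≤ h₁) (hb : 0 ≤ b) (hb₂ : b ≤ h₂)
    (hda : |a - h₁ / 2| ≤ C * h₁ ^ 2) (hdb : |b - h₂ / 2| ≤ C * h₂ ^ 2)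
    (hθ₁ : |θ (-h₁)| ≤ C * h₁) (hθ₂ : |θ h₂| ≤ C * h₂)
    (hlaw₁ : |θ (-a) - 1 / 4 * θ (-h₁) + c * h₁| ≤ C * h₁ ^ 2)
    (hlaw₂ : |θ b - 1 / 4 * θ h₂ - c * h₂| ≤ C * h₂ ^ 2) :
    |a * θ b + b * θ (-a) - (h₁ * θ h₂ + h₂ * θ (-h₁)) / 8|
      ≤ (C ^ 2 / 4 + |c| * C + C) * (h₁ * h₂ * (h₁ + h₂)) := by
  have key : a * θ b + b * θ (-a) - (h₁ * θ h₂ + h₂ * θ (-h₁)) / 8 =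
      ((a - h₁ / 2) * θ h₂ + (b - h₂ / 2) * θ (-h₁)) / 4
      + c * ((a - h₁ / 2) * h₂ - (b - h₂ / 2) * h₁)
      + (a * (θ b - 1 / 4 * θ h₂ - c * h₂) + b * (θ (-a) - 1 / 4 * θ (-h₁) + c * h₁)) := by
    ring
  have e₁ : |(a - h₁ / 2) * θ h₂| ≤ C * h₁ ^ 2 * (C * h₂) := by
    rw [abs_mul]; exact mul_le_mul hda hθ₂ (abs_nonneg _) ((abs_nonneg _).trans hda)
  have e₂ : |(b - h₂ / 2) * θ (-h₁)| ≤ C * h₂ ^ 2 * (C * h₁) := by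
    rw [abs_mul]; exact mul_le_mul hdb hθ₁ (abs_nonneg _) ((abs_nonneg _).trans hdb)
  have e₃ : |c * ((a - h₁ / 2) * h₂ - (b - h₂ / 2) * h₁)|
      ≤ |c| * (C * h₁ ^ 2 * h₂ + C * h₂ ^ 2 * h₁) := by
    rw [abs_mul]
    refine mul_le_mul_of_nonneg_left ((abs_sub _ _).trans ?_) (abs_nonneg c)
    rw [abs_mul, abs_mul, abs_of_nonneg (ha.trans ha₁), abs_of_nonneg (hb.trans hb₂)]
    exact add_le_add (mul_le_mul_of_nonneg_right hda (hb.trans hb₂))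
      (mul_le_mul_of_nonneg_right hdb (ha.trans ha₁))
  have e₄ : |a * (θ b - 1 / 4 * θ h₂ - c * h₂)| ≤ h₁ * (C * h₂ ^ 2) := by
    rw [abs_mul, abs_of_nonneg ha]; exact mul_le_mul ha₁ hlaw₂ (abs_nonneg _) (ha.trans ha₁)
  have e₅ : |b * (θ (-a) - 1 / 4 * θ (-h₁) + c * h₁)| ≤ h₂ * (C * h₁ ^ 2) := by
    rw [abs_mul, abs_of_nonneg hb]; exact mul_le_mul hb₂ hlaw₁ (abs_nonneg _) (hb.trans hb₂)
  rw [key, abs_le]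
  obtain ⟨l₁, u₁⟩ := abs_le.mp e₁
  obtain ⟨l₂, u₂⟩ := abs_le.mp e₂
  obtain ⟨l₃, u₃⟩ := abs_le.mp e₃
  obtain ⟨l₄, u₄⟩ := abs_le.mp e₄
  obtain ⟨l₅, u₅⟩ := abs_le.mp e₅
  constructor <;> linarith

lemma two_rpow_sub_one_mem_Ioc {s : ℝ} (hs0 : 0 < s) (hs1 : s ≤ 1) :
    2 ^ s - 1 ∈ Set.Ioc (0 : ℝ) 1 := by
  refine ⟨sub_pos.2 (one_lt_rpow one_lt_two hs0), ?_⟩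
  have := rpow_le_rpow_of_exponent_le one_le_two hs1
  rw [rpow_one] at this
  linarith

lemma abs_neg_comp_neg_sub_half_le {ψ : ℝ → ℝ} {C ε : ℝ}
    (hψ : ∀ h : ℝ, |h| ≤ ε → |ψ h - h / 2| ≤ C * h ^ 2) {h : ℝ} (hh : |h| ≤ ε) :
    |-ψ (-h) - h / 2| ≤ C * h ^ 2 := by
  have := hψ (-h) ((abs_neg h).trans_le hh)
  rwa [neg_sq, ← abs_neg, neg_sub', neg_div, neg_neg] at this

lemma abs_cross_term_sub_le_of_slope_law {ψ θ : ℝ → ℝ} {C c ε h₁ h₂ : ℝ}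
    (hψ : ∀ h : ℝ, |h| ≤ ε → |ψ h - h / 2| ≤ C * h ^ 2)
    (hθ : ∀ h : ℝ, |h| ≤ ε → |θ h| ≤ C * |h|)
    (hlaw : ∀ h : ℝ, |h| ≤ ε → |θ (ψ h) - (1/4) * θ h - c * h| ≤ C * h ^ 2)
    (h₁0 : 0 < h₁) (h₂0 : 0 < h₂) (h₁ε : h₁ ≤ ε) (h₂ε : h₂ ≤ ε)
    (ha : 0 ≤ -ψ (-h₁)) (ha₁ : -ψ (-h₁) ≤ h₁) (hb : 0 ≤ ψ h₂) (hb₂ : ψ h₂ ≤ h₂) :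
    |(-ψ (-h₁)) * θ (ψ h₂) + ψ h₂ * θ (-(-ψ (-h₁))) - (h₁ * θ h₂ + h₂ * θ (-h₁)) / 8|
      ≤ (C ^ 2 / 4 + |c| * C + C) * (h₁ * h₂ * (h₁ + h₂)) := by
  have h₁ε' : |h₁| ≤ ε := by rwa [abs_of_pos h₁0]
  have h₂ε' : |h₂| ≤ ε := by rwa [abs_of_pos h₂0]
  have hn₁ε' : |-h₁| ≤ ε := by rwa [abs_neg]
  refine abs_cross_term_sub_le ha ha₁ hb hb₂ (abs_neg_comp_neg_sub_half_le hψ h₁ε')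
    (hψ h₂ h₂ε') ?_ ?_ ?_ (hlaw h₂ h₂ε')
  · simpa only [abs_neg, abs_of_pos h₁0] using hθ (-h₁) hn₁ε'
  · simpa only [abs_of_pos h₂0] using hθ h₂ h₂ε'
  · simpa only [neg_neg, neg_sq, mul_neg, sub_neg_eq_add] using hlaw (-h₁) hn₁ε'

lemma abs_le_secondOrderScale_of_contraction {s A K X M x y x' y' : ℝ}
    (hs0 : 0 < s) (hs1 : s ≤ 1) (hA : 0 ≤ A) (hK : 0 ≤ K) (hKA : 16 * A ≤ K * (2 ^ s - 1))
    (hx : 0 ≤ x) (hy : 0 ≤ y) (hxy : x + y ≤ 1)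
    (hxx' : (1 - (2 ^ s - 1) / 12) / 2 * x ≤ x') (hyy' : (1 - (2 ^ s - 1) / 12) / 2 * y ≤ y')
    (hXM : |X - M / 8| ≤ A * (x * y * (x + y))) (hM : |M| ≤ K * secondOrderScale (1 - s) x y) :
    |X| ≤ K * secondOrderScale (1 - s) x' y' := by
  obtain ⟨hγ0, hγ1⟩ := two_rpow_sub_one_mem_Ioc hs0 hs1
  set γ : ℝ := 2 ^ s - 1 with hγ
  set S := secondOrderScale (1 - s) x y
  have hS : 0 ≤ S := secondOrderScale_nonneg hx hy
  have hAS : A * (x * y * (x + y)) ≤ A * S :=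
    mul_le_mul_of_nonneg_left (mul_mul_add_le_secondOrderScale hx hy hxy (by linarith)) hA
  calc |X| ≤ |M| / 8 + A * (x * y * (x + y)) := by
        linarith [abs_sub_abs_le_abs_sub X (M / 8), abs_div M 8,
          abs_of_pos (show (0 : ℝ) < 8 by norm_num)]
    _ ≤ K * (1 + γ / 2) / 8 * S := by linarith [mul_le_mul_of_nonneg_right hKA hS]
    _ ≤ K * ((1 - γ / 12) ^ 3 * (1 + γ)) / 8 * S := by
        gcongr
        exact one_add_half_le_cube_mul hγ0.le hγ1
    _ = K * ((1 - γ / 12) ^ 3 * 2 ^ s / 8 * S) := by rw [hγ]; ring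
    _ ≤ K * secondOrderScale (1 - s) x' y' := by
        gcongr
        exact secondOrderScale_le_of_half_mul_le hs0.le hs1 (by linarith) (by linarith) hx hy
          hxx' hyy'

/-- Lemma 2.17 of the paper with all O-constants explicit: invariance of the
second-order difference bound under the dynamics. -/
theorem second_order_bound_invariant
    (ε' C c ε : ℝ) (hε' : ε' ∈ Set.Ioo (0:ℝ) 1) (hC : 1 ≤ C) (hε : 0 < ε)
    (ψ θ : ℝ → ℝ)
    (hψ : ∀ h : ℝ, |h| ≤ ε → |ψ h - h / 2| ≤ C * h ^ 2)
    (hθ : ∀ h : ℝ, |h| ≤ ε → |θ h| ≤ C * |h|)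
    (hlaw : ∀ h : ℝ, |h| ≤ ε → |θ (ψ h) - (1/4) * θ h - c * h| ≤ C * h ^ 2) :
    ∃ K₀ : ℝ, 1 ≤ K₀ ∧ ∃ εt ∈ Set.Ioc (0:ℝ) ε, ∀ K : ℝ, K₀ ≤ K →
      ∀ h₁ h₂ : ℝ, h₁ ∈ Set.Ioo 0 εt → h₂ ∈ Set.Ioo 0 εt →
        (0 < -ψ (-h₁) ∧ -ψ (-h₁) < h₁ ∧ 0 < ψ h₂ ∧ ψ h₂ < h₂) ∧
        (|h₁ * θ h₂ + h₂ * θ (-h₁)| ≤ K * h₁ * h₂ * (h₁ + h₂) ^ (1 - ε') →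
          |(-ψ (-h₁)) * θ (ψ h₂) + ψ h₂ * θ (-(-ψ (-h₁)))| ≤
            K * (-ψ (-h₁)) * ψ h₂ * ((-ψ (-h₁)) + ψ h₂) ^ (1 - ε')) := by
  obtain ⟨hε'0, hε'1⟩ := hε'
  obtain ⟨hγ0, hγ1⟩ := two_rpow_sub_one_mem_Ioc hε'0 hε'1.le
  set γ : ℝ := 2 ^ ε' - 1
  set A : ℝ := C ^ 2 / 4 + |c| * C + C
  have hC0 : 0 < C := zero_lt_one.trans_le hC
  have hA : 0 ≤ A := by positivity
  -- K₀ lets half of the gain γ absorb the error term; εt keeps ψ(h) ≥ (1 - γ/12) h/2, which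
  -- loses less than the other half (`one_add_half_le_cube_mul`).
  refine ⟨max 1 (16 * A / γ), le_max_left _ _, min ε (γ / (24 * C)),
    ⟨lt_min hε (by positivity), min_le_left _ _⟩, ?_⟩
  rintro K hK h₁ h₂ ⟨h₁0, h₁t⟩ ⟨h₂0, h₂t⟩
  have small : ∀ h, 0 < h → h < min ε (γ / (24 * C)) →
      h ≤ ε ∧ 2 * C * h ≤ γ / 12 ∧ h ≤ 1 / 2 := by
    intro h h0 ht
    obtain ⟨htε, htγ⟩ := lt_min_iff.mp ht
    rw [lt_div_iff₀ (by positivity)] at htγ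
    exact ⟨htε.le, by linarith, by nlinarith⟩
  obtain ⟨h₁ε, h₁δ, h₁half⟩ := small h₁ h₁0 h₁t
  obtain ⟨h₂ε, h₂δ, h₂half⟩ := small h₂ h₂0 h₂t
  obtain ⟨ha, ha₁⟩ := half_mul_le_and_lt_of_abs_sub_half_le h₁0 (by linarith) h₁δ
    (abs_neg_comp_neg_sub_half_le hψ (by rwa [abs_of_pos h₁0]))
  obtain ⟨hb, hb₂⟩ := half_mul_le_and_lt_of_abs_sub_half_le h₂0 (by linarith) h₂δ
    (hψ h₂ (by rwa [abs_of_pos h₂0]))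
  have ha0 : 0 < -ψ (-h₁) := (mul_pos (by linarith) h₁0).trans_le ha
  have hb0 : 0 < ψ h₂ := (mul_pos (by linarith) h₂0).trans_le hb
  refine ⟨⟨ha0, ha₁, hb0, hb₂⟩, fun hM => ?_⟩
  have hKA : 16 * A ≤ K * γ := (div_le_iff₀ hγ0).mp ((le_max_right _ _).trans hK)
  simpa only [secondOrderScale, mul_assoc] using
    abs_le_secondOrderScale_of_contraction hε'0 hε'1.le hA
      (by linarith [le_max_left 1 (16 * A / γ)]) hKA h₁0.le h₂0.le (by linarith) ha hb
      (abs_cross_term_sub_le_of_slope_law hψ hθ hlaw h₁0 h₂0 h₁ε h₂ε ha0.le ha₁.le hb0.le hb₂.le)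
      (by simpa only [secondOrderScale, mul_assoc] using hM)
end

section
/- Let α ∈ (0,1], ε ∈ (0,α), L ≥ 1, c ≥ 1, and let P : ℕ → ℝ with P(n) ≥ 1 for all n. Then there exist N ∈ ℕ, K > 0 and ε₁ ∈ (0,1) such that: for every integer n with N ≤ n ≤ 2N, all reals y, z with 0 < |z| ≤ |y|, |y| ≤ ε₁ and |y| ≤ L·2ⁿ·|z|, and all reals a, b, γ, θ with |a − 2ⁿ| ≤ c·|y|, |b − 2^{−n}| ≤ c·|y|, |γ| ≤ P(n)·|y| and |θ| ≤ K·|y|^{α−ε}, one has a ≠ 0 and |γ/a + (b/a)·θ| ≤ K·|z|^{α−ε}. -/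
/-!
Write `A = 2ⁿ`, `β = α - ε` and `K = 4 L M`, where `M` bounds `P` on `[0, 2N]`. The choice of `ε₁`
makes `c |y| ≤ A⁻¹`, hence `a ≥ A / 2` and `|b| ≤ 2 / A`. Then
`|γ + b θ| ≤ M |y|^β + (2 / A) K |y|^β ≤ 2 M |y|^β` as soon as `8 L ≤ A`, which `N ≤ n` guarantees;
dividing by `a` and using `|y|^β ≤ L A |z|^β` (from `|y| ≤ L A |z|` and `β ≤ 1`) leaves `K |z|^β`.
-/

open Real

lemma Real.rpow_le_mul_rpow_of_le_mul {x y C β : ℝ} (hx : 0 ≤ x) (hy : 0 ≤ y) (hC : 1 ≤ C)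
    (hβ0 : 0 ≤ β) (hβ1 : β ≤ 1) (hxy : x ≤ C * y) : x ^ β ≤ C * y ^ β :=
  calc x ^ β ≤ (C * y) ^ β := rpow_le_rpow hx hxy hβ0
    _ = C ^ β * y ^ β := mul_rpow (by linarith) hy
    _ ≤ C * y ^ β := by gcongr; exact rpow_le_self_of_one_le hC hβ1

lemma half_le_of_abs_sub_le_inv {a A δ : ℝ} (hA : 2 ≤ A) (hδ : δ ≤ A⁻¹) (ha : |a - A| ≤ δ) :
    A / 2 ≤ a := by
  have : A⁻¹ ≤ 1 := inv_le_one_of_one_le₀ (by linarith)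
  linarith [(abs_le.mp ha).1]

lemma abs_le_two_div_of_abs_sub_inv_le {b A δ : ℝ} (hA : 0 < A) (hδ : δ ≤ A⁻¹)
    (hb : |b - A⁻¹| ≤ δ) : |b| ≤ 2 / A := by
  have := abs_sub_abs_le_abs_sub b A⁻¹
  rw [abs_of_pos (inv_pos.mpr hA)] at this
  linarith [div_eq_mul_inv 2 A]

lemma abs_div_add_div_mul_le {A L M s a b γ θ : ℝ} (hA : 0 < A) (hLA : 8 * L ≤ A)
    (ha : A / 2 ≤ a) (hb : |b| ≤ 2 / A) (hγ : |γ| ≤ M * s) (hθ : |θ| ≤ 4 * L * M * s)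
    (hM : 0 ≤ M) (hs : 0 ≤ s) : |γ / a + b / a * θ| ≤ 4 * M * s / A := by
  have ha0 : 0 < a := by linarith
  have hnum : |γ + b * θ| ≤ 2 * M * s :=
    calc |γ + b * θ| ≤ |γ| + |b| * |θ| := by rw [← abs_mul]; exact abs_add_le _ _
      _ ≤ M * s + 2 / A * (4 * L * M * s) := by gcongr
      _ = M * s * (1 + 8 * L / A) := by ring
      _ ≤ M * s * 2 := by gcongr; linarith [(div_le_one hA).mpr hLA]
      _ = 2 * M * s := by ring
  calc |γ / a + b / a * θ| = |γ + b * θ| / a := by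
        rw [← abs_of_pos ha0, ← abs_div, abs_of_pos ha0, add_div, mul_div_right_comm]
    _ ≤ 2 * M * s / (A / 2) := by gcongr
    _ = 4 * M * s / A := by ring

lemma mul_le_inv_two_pow_of_le {c x : ℝ} {n N : ℕ} (hc : 0 < c) (hn : n ≤ N)
    (hx : x ≤ (2 ^ N)⁻¹ / c) : c * x ≤ (2 ^ n)⁻¹ :=
  calc c * x ≤ (2 ^ N)⁻¹ := (le_div_iff₀' hc).mp hx
    _ ≤ (2 ^ n)⁻¹ := inv_anti₀ (by positivity) (pow_le_pow_right₀ one_le_two hn)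

/-- Quantitative core of Lemma 2.11: the action of `dφⁿ` propagates the Hölder bound
`|θ(y)| ≤ K |y|^(α-ε)` from `y` to `z = φⁿ(y)`. -/
theorem holder_bound_propagation
    (α ε L c : ℝ) (hα : α ∈ Set.Ioc (0:ℝ) 1) (hε : ε ∈ Set.Ioo 0 α)
    (hL : 1 ≤ L) (hc : 1 ≤ c) (P : ℕ → ℝ) (hP : ∀ n, 1 ≤ P n) :
    ∃ N : ℕ, ∃ K > (0:ℝ), ∃ ε₁ ∈ Set.Ioo (0:ℝ) 1,
      ∀ n : ℕ, N ≤ n → n ≤ 2 * N →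
      ∀ y z a b γ θ : ℝ,
        0 < |z| → |z| ≤ |y| → |y| ≤ ε₁ → |y| ≤ L * 2 ^ n * |z| →
        |a - 2 ^ n| ≤ c * |y| → |b - (2:ℝ) ^ (-(n:ℤ))| ≤ c * |y| →
        |γ| ≤ P n * |y| → |θ| ≤ K * |y| ^ (α - ε) →
        a ≠ 0 ∧ |γ / a + (b / a) * θ| ≤ K * |z| ^ (α - ε) := by
  obtain ⟨N, hN⟩ : ∃ N : ℕ, 8 * L ≤ 2 ^ N :=
    (pow_unbounded_of_one_lt _ one_lt_two).imp fun _ => le_of_lt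
  obtain ⟨M, hM⟩ := ((Set.finite_Iic (2 * N)).image P).bddAbove
  have hPM : ∀ m ≤ 2 * N, P m ≤ M := fun m hm => hM ⟨m, hm, rfl⟩
  have hM1 : 1 ≤ M := (hP 0).trans (hPM 0 (Nat.zero_le _))
  refine ⟨N, 4 * L * M, by positivity, min (1 / 2) ((2 ^ (2 * N))⁻¹ / c),
    ⟨by positivity, (min_le_left _ _).trans_lt (by norm_num)⟩, ?_⟩
  intro n hNn hn2N y z a b γ θ _ _ hyε hyLz ha hb hγ hθ
  rw [zpow_neg, zpow_natCast] at hb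
  set A : ℝ := 2 ^ n
  have hA : 0 < A := by positivity
  have hLA : 8 * L ≤ A := hN.trans (pow_le_pow_right₀ one_le_two hNn)
  have hcy : c * |y| ≤ A⁻¹ :=
    mul_le_inv_two_pow_of_le (by positivity) hn2N (hyε.trans (min_le_right _ _))
  have ha' : A / 2 ≤ a := half_le_of_abs_sub_le_inv (by linarith) hcy ha
  have hy1 : |y| ≤ 1 := hyε.trans ((min_le_left _ _).trans (by norm_num))
  have hβ1 : α - ε ≤ 1 := by linarith [hα.2, hε.1]
  have hys : |y| ^ (α - ε) ≤ L * A * |z| ^ (α - ε) :=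
    rpow_le_mul_rpow_of_le_mul (abs_nonneg y) (abs_nonneg z) (by nlinarith)
      (by linarith [hε.2]) hβ1 hyLz
  have hγ' : |γ| ≤ M * |y| ^ (α - ε) :=
    hγ.trans (mul_le_mul (hPM n hn2N) (self_le_rpow_of_le_one (abs_nonneg y) hy1 hβ1)
      (abs_nonneg y) (by positivity))
  refine ⟨(by linarith : 0 < a).ne', ?_⟩
  calc |γ / a + b / a * θ| ≤ 4 * M * |y| ^ (α - ε) / A :=
        abs_div_add_div_mul_le hA hLA ha'
          (abs_le_two_div_of_abs_sub_inv_le hA hcy hb) hγ' hθ (by positivity)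
          (by positivity)
    _ ≤ 4 * M * (L * A * |z| ^ (α - ε)) / A := by gcongr
    _ = 4 * L * M * |z| ^ (α - ε) := by field_simp [hA.ne']
end

section
/- Let α ∈ (0,1], ε ∈ (0,α), L ≥ 1, λ, κ ∈ (0,1) with κ ≤ λ and λ²·κ^{−α} < 1, and let P : ℕ → ℝ with P(n) ≥ 1 for all n. Then there exist N ∈ ℕ, K > 0 and ε₁ ∈ (0,1) such that for every integer n with N ≤ n ≤ 2N and all reals s, t with 0 < t ≤ s, s ≤ ε₁ and s ≤ L·κ^{−n}·t, one has P(n)·s·L·λⁿ + (L·λⁿ)·(K·s^{α−ε})·(L·λⁿ) ≤ K·t^{α−ε}. -/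
/-!
Put `β = α - ε` and `q = κ^{-β}`. Since `κ < 1` and `ε > 0`, the bunching condition survives the
loss of `ε`: `ρ = λ² q < 1`. For `s ≤ 1` we have `s ≤ s^β`, and `s ≤ L κ^{-n} t` gives
`s^β ≤ L^β qⁿ t^β`. The second term of the left-hand side is then at most `K · L² L^β ρⁿ · t^β`,
which is `≤ K t^β / 2` once `n ≥ N`. The first term is at most `P(n) (λq)ⁿ · L L^β t^β`, and for
`n ≤ 2N` the factor `P(n) (λq)ⁿ` is bounded by the finite sum `S = ∑_{m ≤ 2N} P(m) (λq)^m`;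
`K = 2 L L^β S` makes this term `≤ K t^β / 2` too.
-/

open Filter Finset

lemma mul_rpow_neg_sub_lt_one {lam κ α ε : ℝ} (hκ₀ : 0 < κ) (hκ₁ : κ ≤ 1) (hε : 0 ≤ ε)
    (h : lam ^ 2 * κ ^ (-α) < 1) : lam ^ 2 * κ ^ (-(α - ε)) < 1 :=
  (mul_le_mul_of_nonneg_left (Real.rpow_le_rpow_of_exponent_ge hκ₀ hκ₁ (by linarith))
    (sq_nonneg lam)).trans_lt h

lemma rpow_le_of_le_mul_zpow_neg {s t L κ β : ℝ} {n : ℕ} (hs : 0 ≤ s) (ht : 0 ≤ t) (hL : 0 ≤ L)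
    (hκ : 0 < κ) (hβ : 0 ≤ β) (h : s ≤ L * κ ^ (-(n : ℤ)) * t) :
    s ^ β ≤ L ^ β * (κ ^ (-β)) ^ n * t ^ β := by
  calc s ^ β ≤ (L * κ ^ (-(n : ℤ)) * t) ^ β := Real.rpow_le_rpow hs h hβ
    _ = L ^ β * (κ ^ (-β)) ^ n * t ^ β := by
      rw [Real.mul_rpow (by positivity) ht, Real.mul_rpow hL (by positivity),
        ← Real.rpow_intCast, ← Real.rpow_mul hκ.le, ← Real.rpow_natCast, ← Real.rpow_mul hκ.le]
      push_cast
      ring_nf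

/-- The estimate for a single `n`, with `σ` and `τ` standing for `s^β` and `t^β`, `C` for `L^β`
and `q` for `κ^{-β}`. -/
lemma graph_transform_estimate {p s σ τ L lam q C S K : ℝ} {n : ℕ} (hp : 0 ≤ p) (hL : 0 ≤ L)
    (hlam : 0 ≤ lam) (hτ : 0 ≤ τ) (hC : 0 ≤ C) (hK : 0 ≤ K)
    (hs : s ≤ C * q ^ n * τ) (hσ : σ ≤ C * q ^ n * τ) (hS : p * (lam * q) ^ n ≤ S)
    (hρ : L ^ 2 * C * (lam ^ 2 * q) ^ n ≤ 1 / 2) (hSK : 2 * L * C * S ≤ K) :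
    p * s * (L * lam ^ n) + L * lam ^ n * (K * σ) * (L * lam ^ n) ≤ K * τ := by
  calc p * s * (L * lam ^ n) + L * lam ^ n * (K * σ) * (L * lam ^ n)
      ≤ p * (C * q ^ n * τ) * (L * lam ^ n)
        + L * lam ^ n * (K * (C * q ^ n * τ)) * (L * lam ^ n) := by gcongr
    _ = p * (lam * q) ^ n * (L * C * τ) + K * (L ^ 2 * C * (lam ^ 2 * q) ^ n) * τ := by ring
    _ ≤ S * (L * C * τ) + K * (1 / 2) * τ := by gcongr
    _ ≤ K * τ := by nlinarith [mul_le_mul_of_nonneg_right hSK hτ]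

theorem bunched_holder_estimate_general
    (α ε L lam kap : ℝ) (hα : α ∈ Set.Ioc (0:ℝ) 1) (hε : ε ∈ Set.Ioo 0 α)
    (hL : 1 ≤ L) (hlam : lam ∈ Set.Ioo (0:ℝ) 1) (hkap : kap ∈ Set.Ioo (0:ℝ) 1)
    (hbunch : lam ^ 2 * kap ^ (-α) < 1)
    (P : ℕ → ℝ) (hP : ∀ n, 1 ≤ P n) :
    ∃ N : ℕ, ∃ K > (0:ℝ), ∃ ε₁ ∈ Set.Ioo (0:ℝ) 1,
      ∀ n : ℕ, N ≤ n → n ≤ 2 * N →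
      ∀ s t : ℝ, 0 < t → t ≤ s → s ≤ ε₁ → s ≤ L * kap ^ (-(n:ℤ)) * t →
        P n * s * (L * lam ^ n) + (L * lam ^ n) * (K * s ^ (α - ε)) * (L * lam ^ n) ≤
          K * t ^ (α - ε) := by
  obtain ⟨-, hα₁⟩ := hα
  obtain ⟨hε₀, hεα⟩ := hε
  obtain ⟨hlam₀, -⟩ := hlam
  obtain ⟨hkap₀, hkap₁⟩ := hkap
  have hL₀ : 0 ≤ L := zero_le_one.trans hL
  set q := kap ^ (-(α - ε))
  have hq : 0 < q := Real.rpow_pos_of_pos hkap₀ _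
  have hρ : lam ^ 2 * q < 1 := mul_rpow_neg_sub_lt_one hkap₀ hkap₁.le hε₀.le hbunch
  obtain ⟨N, hN⟩ := eventually_atTop.1 <|
    ((tendsto_pow_atTop_nhds_zero_of_lt_one (by positivity) hρ).const_mul
      (L ^ 2 * L ^ (α - ε))).eventually_le_const (by norm_num : (L ^ 2 * L ^ (α - ε)) * 0 < 1 / 2)
  set S := ∑ m ∈ range (2 * N + 1), P m * (lam * q) ^ m
  have hterm (m : ℕ) : 0 ≤ P m * (lam * q) ^ m := by have := hP m; positivity
  have hS : 0 < S := (zero_lt_one.trans_le (hP 0)).trans_le <| by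
    simpa using single_le_sum (fun m _ ↦ hterm m) (mem_range.2 (Nat.succ_pos (2 * N)))
  refine ⟨N, 2 * L * L ^ (α - ε) * S, by positivity, 1 / 2, by norm_num, ?_⟩
  intro n hNn hn2N s t ht hts hs hsn
  have hsβ : s ^ (α - ε) ≤ L ^ (α - ε) * q ^ n * t ^ (α - ε) :=
    rpow_le_of_le_mul_zpow_neg (ht.le.trans hts) ht.le hL₀ hkap₀ (by linarith) hsn
  have hs_le : s ≤ s ^ (α - ε) :=
    Real.self_le_rpow_of_le_one (ht.le.trans hts) (by linarith) (by linarith)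
  exact graph_transform_estimate (zero_le_one.trans (hP n)) hL₀ hlam₀.le (by positivity)
    (by positivity) (by positivity) (hs_le.trans hsβ) hsβ
    (single_le_sum (fun m _ ↦ hterm m) (mem_range.2 (Nat.lt_succ_of_le hn2N))) (hN n hNn) le_rfl

/-- Numerical estimate (3.1) underlying Hölder continuity of the unstable distribution
for bunched Anosov diffeomorphisms in arbitrary dimension. -/
theorem bunched_holder_estimate
    (α ε L lam kap : ℝ) (hα : α ∈ Set.Ioc (0:ℝ) 1) (hε : ε ∈ Set.Ioo 0 α)
    (hL : 1 ≤ L) (hlam : lam ∈ Set.Ioo (0:ℝ) 1) (hkap : kap ∈ Set.Ioo (0:ℝ) 1)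
    (hkl : kap ≤ lam) (hbunch : lam ^ 2 * kap ^ (-α) < 1)
    (P : ℕ → ℝ) (hP : ∀ n, 1 ≤ P n) :
    ∃ N : ℕ, ∃ K > (0:ℝ), ∃ ε₁ ∈ Set.Ioo (0:ℝ) 1,
      ∀ n : ℕ, N ≤ n → n ≤ 2 * N →
      ∀ s t : ℝ, 0 < t → t ≤ s → s ≤ ε₁ → s ≤ L * kap ^ (-(n:ℤ)) * t →
        P n * s * (L * lam ^ n) + (L * lam ^ n) * (K * s ^ (α - ε)) * (L * lam ^ n) ≤
          K * t ^ (α - ε) :=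
  bunched_holder_estimate_general α ε L lam kap hα hε hL hlam hkap hbunch P hP
end

section
/- Let E and F be real normed vector spaces, ω, λ ∈ (0,1), R' ≥ 1. Let φ : E → E satisfy φ(0) = 0 and ‖φ(y)‖ ≤ ω·‖y‖ for all ‖y‖ ≤ 1, and let B : ℕ → E → (F →L F) satisfy: B₀(y) = id for all y; B_{n+1}(y) = Bₙ(φ(y)) ∘ B₁(y) for all n and all ‖y‖ ≤ 1; ‖Bₙ(0)‖ ≤ R'·λⁿ for all n; and ‖B₁(y) − B₁(0)‖ ≤ R'·‖y‖ for all ‖y‖ ≤ 1. Then there exists R > 1 such that for all n ∈ ℕ and all y with ‖y‖ ≤ 1, ‖Bₙ(y) − Bₙ(0)‖ ≤ R·λⁿ·‖y‖. -/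
/-!
With `A = B₁(0)` the cocycle relation gives `Bₙ(0) = Aⁿ`, and `Bₙ(y)` is the ordered product of
the factors `B₁(φᵏ y) = A + Eₖ`, where `‖Eₖ‖ ≤ R' ωᵏ ‖y‖`. In the expansion of this product a word
containing `j` perturbations `Eₖ` splits the remaining powers of `A` into at most `j + 1` blocks,
each bounded by `R' λ^(length)`, so
`‖Bₙ(y) - Aⁿ‖ ≤ R' λⁿ (∏ₖ (1 + R' ‖Eₖ‖ / λ) - 1) ≤ R' λⁿ (exp (R' / λ * ∑ₖ ‖Eₖ‖) - 1)`,
and `∑ₖ ‖Eₖ‖ ≤ R' ‖y‖ / (1 - ω)` because `φ` contracts.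
The induction carries an extra right factor `Aᵖ`, so that only the bounds on `‖Aⁿ‖` are used,
never one on `‖A‖` itself.
-/

open Finset Function Real Set

lemma exp_mul_one_add_le (s t : ℝ) : exp s * (1 + t) ≤ exp (s + t) := by
  rw [exp_add]
  gcongr
  linarith [add_one_le_exp t]

lemma exp_mul_sub_one_le_mul {a t : ℝ} (ht₀ : 0 ≤ t) (ht₁ : t ≤ 1) :
    exp (t * a) - 1 ≤ t * (exp a - 1) := by
  have h := convexOn_exp.2 (mem_univ a) (mem_univ 0) ht₀ (sub_nonneg.2 ht₁) (by ring)
  simp only [smul_eq_mul, mul_zero, add_zero, exp_zero, mul_one] at h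
  linarith

section Cocycle

variable {X R : Type*} [NormedRing R]

def deviationSum (T : X → X) (G : ℕ → X → R) (A : R) (n : ℕ) (x : X) : ℝ :=
  ∑ k ∈ range n, ‖G 1 (T^[k] x) - A‖

lemma deviationSum_zero (T : X → X) (G : ℕ → X → R) (A : R) (x : X) :
    deviationSum T G A 0 x = 0 := by
  simp [deviationSum]

lemma deviationSum_succ (T : X → X) (G : ℕ → X → R) (A : R) (n : ℕ) (x : X) :
    deviationSum T G A (n + 1) x = deviationSum T G A n (T x) + ‖G 1 x - A‖ := by
  simp only [deviationSum, sum_range_succ', iterate_succ_apply, iterate_zero_apply]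

variable {T : X → X} {S : Set X} {G : ℕ → X → R}

lemma cocycle_eq_pow_of_isFixedPt (hG₀ : ∀ x, G 0 x = 1)
    (hG : ∀ n, ∀ x ∈ S, G (n + 1) x = G n (T x) * G 1 x) {x₀ : X} (hx₀ : x₀ ∈ S)
    (hfix : IsFixedPt T x₀) (n : ℕ) : G n x₀ = G 1 x₀ ^ n := by
  induction n with
  | zero => rw [hG₀, pow_zero]
  | succ n ih => rw [hG n x₀ hx₀, hfix.eq, ih, pow_succ]

variable {A : R} {C lam : ℝ}

lemma nonneg_of_forall_norm_pow_le (hA : ∀ n, ‖A ^ n‖ ≤ C * lam ^ n) : 0 ≤ C := by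
  simpa using (norm_nonneg _).trans (hA 0)

lemma norm_mul_mul_pow_le (hlam : 0 < lam) (hA : ∀ n, ‖A ^ n‖ ≤ C * lam ^ n) {a e : R}
    {n p : ℕ} {s : ℝ} (ha : ‖a‖ ≤ C * lam ^ n * exp s) :
    ‖a * (e * A ^ p)‖ ≤ C * lam ^ (n + (p + 1)) * exp s * (C / lam * ‖e‖) := by
  have := nonneg_of_forall_norm_pow_le hA
  calc ‖a * (e * A ^ p)‖ ≤ ‖a‖ * (‖e‖ * ‖A ^ p‖) :=
        (norm_mul_le _ _).trans (by gcongr; exact norm_mul_le _ _)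
    _ ≤ C * lam ^ n * exp s * (‖e‖ * (C * lam ^ p)) := by gcongr; exact hA p
    _ = C * lam ^ (n + (p + 1)) * exp s * (C / lam * ‖e‖) := by
        field_simp
        ring

lemma norm_cocycle_mul_pow_le (hS : MapsTo T S S) (hG₀ : ∀ x, G 0 x = 1)
    (hG : ∀ n, ∀ x ∈ S, G (n + 1) x = G n (T x) * G 1 x) (hlam : 0 < lam)
    (hA : ∀ n, ‖A ^ n‖ ≤ C * lam ^ n) (n : ℕ) :
    ∀ x ∈ S, ∀ p : ℕ,
      ‖G n x * A ^ p‖ ≤ C * lam ^ (n + p) * exp (C / lam * deviationSum T G A n x) := by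
  induction n with
  | zero => intro x _ p; simpa [hG₀, deviationSum_zero] using hA p
  | succ n ih =>
    intro x hx p
    set s := C / lam * deviationSum T G A n (T x)
    have hsplit : G (n + 1) x * A ^ p
        = G n (T x) * A ^ (p + 1) + G n (T x) * ((G 1 x - A) * A ^ p) := by
      rw [hG n x hx, pow_succ']
      noncomm_ring
    have hGn : ‖G n (T x)‖ ≤ C * lam ^ n * exp s := by simpa using ih (T x) (hS hx) 0
    rw [show n + 1 + p = n + (p + 1) by omega, hsplit, deviationSum_succ, mul_add]
    calc _ ≤ ‖G n (T x) * A ^ (p + 1)‖ + ‖G n (T x) * ((G 1 x - A) * A ^ p)‖ := norm_add_le _ _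
      _ ≤ C * lam ^ (n + (p + 1)) * exp s
          + C * lam ^ (n + (p + 1)) * exp s * (C / lam * ‖G 1 x - A‖) :=
        add_le_add (ih (T x) (hS hx) (p + 1)) (norm_mul_mul_pow_le hlam hA hGn)
      _ = C * lam ^ (n + (p + 1)) * (exp s * (1 + C / lam * ‖G 1 x - A‖)) := by ring
      _ ≤ _ := by
        have := nonneg_of_forall_norm_pow_le hA
        gcongr
        exact exp_mul_one_add_le _ _

lemma norm_cocycle_sub_pow_mul_pow_le (hS : MapsTo T S S) (hG₀ : ∀ x, G 0 x = 1)
    (hG : ∀ n, ∀ x ∈ S, G (n + 1) x = G n (T x) * G 1 x) (hlam : 0 < lam)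
    (hA : ∀ n, ‖A ^ n‖ ≤ C * lam ^ n) (n : ℕ) :
    ∀ x ∈ S, ∀ p : ℕ, ‖(G n x - A ^ n) * A ^ p‖
      ≤ C * lam ^ (n + p) * (exp (C / lam * deviationSum T G A n x) - 1) := by
  induction n with
  | zero => intro x _ p; simp [hG₀, deviationSum_zero]
  | succ n ih =>
    intro x hx p
    set s := C / lam * deviationSum T G A n (T x)
    have hsplit : (G (n + 1) x - A ^ (n + 1)) * A ^ p
        = G n (T x) * ((G 1 x - A) * A ^ p) + (G n (T x) - A ^ n) * A ^ (p + 1) := by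
      rw [hG n x hx, pow_succ' A p, pow_succ A n]
      noncomm_ring
    have hGn : ‖G n (T x)‖ ≤ C * lam ^ n * exp s := by
      simpa using norm_cocycle_mul_pow_le hS hG₀ hG hlam hA n (T x) (hS hx) 0
    rw [show n + 1 + p = n + (p + 1) by omega, hsplit, deviationSum_succ, mul_add]
    calc _ ≤ ‖G n (T x) * ((G 1 x - A) * A ^ p)‖ + ‖(G n (T x) - A ^ n) * A ^ (p + 1)‖ :=
          norm_add_le _ _
      _ ≤ C * lam ^ (n + (p + 1)) * exp s * (C / lam * ‖G 1 x - A‖)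
          + C * lam ^ (n + (p + 1)) * (exp s - 1) :=
        add_le_add (norm_mul_mul_pow_le hlam hA hGn) (ih (T x) (hS hx) (p + 1))
      _ = C * lam ^ (n + (p + 1)) * (exp s * (1 + C / lam * ‖G 1 x - A‖) - 1) := by ring
      _ ≤ _ := by
        have := nonneg_of_forall_norm_pow_le hA
        gcongr
        exact exp_mul_one_add_le _ _

end Cocycle

section Contraction

variable {E R : Type*} [NormedAddCommGroup E] [NormedRing R] {φ : E → E} {ω : ℝ}

lemma norm_iterate_le_pow_mul_norm (hω₀ : 0 ≤ ω) (hω₁ : ω ≤ 1)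
    (hφ : ∀ y : E, ‖y‖ ≤ 1 → ‖φ y‖ ≤ ω * ‖y‖) {y : E} (hy : ‖y‖ ≤ 1) (k : ℕ) :
    ‖φ^[k] y‖ ≤ ω ^ k * ‖y‖ := by
  induction k with
  | zero => simp
  | succ k ih =>
    rw [iterate_succ_apply']
    calc ‖φ (φ^[k] y)‖ ≤ ω * ‖φ^[k] y‖ :=
          hφ _ (ih.trans (mul_le_one₀ (pow_le_one₀ hω₀ hω₁) (norm_nonneg _) hy))
      _ ≤ ω * (ω ^ k * ‖y‖) := by gcongr
      _ = ω ^ (k + 1) * ‖y‖ := by ring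

lemma mapsTo_closedBall_of_norm_le (hω₁ : ω ≤ 1)
    (hφ : ∀ y : E, ‖y‖ ≤ 1 → ‖φ y‖ ≤ ω * ‖y‖) :
    MapsTo φ (Metric.closedBall 0 1) (Metric.closedBall 0 1) := fun y hy => by
  rw [mem_closedBall_zero_iff] at hy ⊢
  exact (hφ y hy).trans (mul_le_one₀ hω₁ (norm_nonneg _) hy)

lemma deviationSum_le_mul_norm (hω₀ : 0 ≤ ω) (hω₁ : ω < 1)
    (hφ : ∀ y : E, ‖y‖ ≤ 1 → ‖φ y‖ ≤ ω * ‖y‖) {G : ℕ → E → R} {L : ℝ} (hL : 0 ≤ L)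
    (hG₁ : ∀ y : E, ‖y‖ ≤ 1 → ‖G 1 y - G 1 0‖ ≤ L * ‖y‖) {y : E} (hy : ‖y‖ ≤ 1) (n : ℕ) :
    deviationSum φ G (G 1 0) n y ≤ L / (1 - ω) * ‖y‖ := by
  have hiter := norm_iterate_le_pow_mul_norm hω₀ hω₁.le hφ hy
  have hterm (k : ℕ) : ‖G 1 (φ^[k] y) - G 1 0‖ ≤ L * (ω ^ k * ‖y‖) :=
    (hG₁ _ ((hiter k).trans (mul_le_one₀ (pow_le_one₀ hω₀ hω₁.le) (norm_nonneg _) hy))).trans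
      (mul_le_mul_of_nonneg_left (hiter k) hL)
  calc deviationSum φ G (G 1 0) n y ≤ ∑ k ∈ range n, L * (ω ^ k * ‖y‖) :=
        sum_le_sum fun k _ => hterm k
    _ = L * ‖y‖ * ∑ k ∈ range n, ω ^ k := by
        rw [mul_sum]
        exact sum_congr rfl fun _ _ => by ring
    _ ≤ L * ‖y‖ * (ω ^ 0 / (1 - ω)) := by
        gcongr
        rw [range_eq_Ico]
        exact geom_sum_Ico_le_of_lt_one hω₀ hω₁
    _ = L / (1 - ω) * ‖y‖ := by ring

end Contraction

theorem cocycle_lipschitz_exponential_bound_general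
    (E F : Type*) [NormedAddCommGroup E] [NormedSpace ℝ E]
    [NormedAddCommGroup F] [NormedSpace ℝ F]
    (ω lam R' : ℝ) (hω : ω ∈ Set.Ioo (0:ℝ) 1) (hlam : lam ∈ Set.Ioo (0:ℝ) 1)
    (φ : E → E) (hφ0 : φ 0 = 0) (hφ : ∀ y : E, ‖y‖ ≤ 1 → ‖φ y‖ ≤ ω * ‖y‖)
    (B : ℕ → E → (F →L[ℝ] F))
    (hB0 : ∀ y : E, B 0 y = ContinuousLinearMap.id ℝ F)
    (hBrec : ∀ (n : ℕ) (y : E), ‖y‖ ≤ 1 → B (n + 1) y = (B n (φ y)).comp (B 1 y))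
    (hBn0 : ∀ n : ℕ, ‖B n 0‖ ≤ R' * lam ^ n)
    (hB1 : ∀ y : E, ‖y‖ ≤ 1 → ‖B 1 y - B 1 0‖ ≤ R' * ‖y‖) :
    ∃ R : ℝ, 1 < R ∧ ∀ (n : ℕ) (y : E), ‖y‖ ≤ 1 →
      ‖B n y - B n 0‖ ≤ R * lam ^ n * ‖y‖ := by
  have hlam₀ : 0 < lam := hlam.1
  have hmaps := mapsTo_closedBall_of_norm_le hω.2.le hφ
  have hG : ∀ n, ∀ y ∈ Metric.closedBall (0 : E) 1, B (n + 1) y = B n (φ y) * B 1 y :=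
    fun n y hy => hBrec n y (mem_closedBall_zero_iff.1 hy)
  have hpow : ∀ n, B n 0 = B 1 0 ^ n :=
    cocycle_eq_pow_of_isFixedPt hB0 hG (Metric.mem_closedBall_self zero_le_one) hφ0
  have hA : ∀ n, ‖B 1 0 ^ n‖ ≤ R' * lam ^ n := fun n => hpow n ▸ hBn0 n
  have hR'₀ : 0 ≤ R' := nonneg_of_forall_norm_pow_le hA
  set K := R' / lam * (R' / (1 - ω))
  refine ⟨max 2 (R' * (exp K - 1)), one_lt_two.trans_le (le_max_left _ _), fun n y hy => ?_⟩
  have hdev := deviationSum_le_mul_norm hω.1.le hω.2 hφ hR'₀ hB1 hy n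
  calc ‖B n y - B n 0‖
      ≤ R' * lam ^ n * (exp (R' / lam * deviationSum φ B (B 1 0) n y) - 1) := by
        have := norm_cocycle_sub_pow_mul_pow_le hmaps hB0 hG hlam₀ hA n y
          (mem_closedBall_zero_iff.2 hy) 0
        rwa [pow_zero, mul_one, add_zero, ← hpow] at this
    _ ≤ R' * lam ^ n * (exp (‖y‖ * K) - 1) := by
        gcongr R' * lam ^ n * (exp ?_ - 1)
        calc R' / lam * deviationSum φ B (B 1 0) n y ≤ R' / lam * (R' / (1 - ω) * ‖y‖) := by
              gcongr
          _ = ‖y‖ * K := by ring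
    _ ≤ R' * lam ^ n * (‖y‖ * (exp K - 1)) := by
        gcongr
        exact exp_mul_sub_one_le_mul (norm_nonneg y) hy
    _ = R' * (exp K - 1) * lam ^ n * ‖y‖ := by ring
    _ ≤ max 2 (R' * (exp K - 1)) * lam ^ n * ‖y‖ := by
        gcongr
        exact le_max_right _ _

/-- Claim (3.4) of §3.3: a Lipschitz-in-`y` exponential bound
`‖Bₙ(y) − Bₙ(0)‖ ≤ R λⁿ ‖y‖` uniform in `n` for the stable cocycle. -/
theorem cocycle_lipschitz_exponential_bound
    (E F : Type*) [NormedAddCommGroup E] [NormedSpace ℝ E]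
    [NormedAddCommGroup F] [NormedSpace ℝ F]
    (ω lam R' : ℝ) (hω : ω ∈ Set.Ioo (0:ℝ) 1) (hlam : lam ∈ Set.Ioo (0:ℝ) 1)
    (hR' : 1 ≤ R')
    (φ : E → E) (hφ0 : φ 0 = 0) (hφ : ∀ y : E, ‖y‖ ≤ 1 → ‖φ y‖ ≤ ω * ‖y‖)
    (B : ℕ → E → (F →L[ℝ] F))
    (hB0 : ∀ y : E, B 0 y = ContinuousLinearMap.id ℝ F)
    (hBrec : ∀ (n : ℕ) (y : E), ‖y‖ ≤ 1 → B (n + 1) y = (B n (φ y)).comp (B 1 y))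
    (hBn0 : ∀ n : ℕ, ‖B n 0‖ ≤ R' * lam ^ n)
    (hB1 : ∀ y : E, ‖y‖ ≤ 1 → ‖B 1 y - B 1 0‖ ≤ R' * ‖y‖) :
    ∃ R : ℝ, 1 < R ∧ ∀ (n : ℕ) (y : E), ‖y‖ ≤ 1 →
      ‖B n y - B n 0‖ ≤ R * lam ^ n * ‖y‖ :=
  cocycle_lipschitz_exponential_bound_general E F ω lam R' hω hlam φ hφ0 hφ B hB0 hBrec hBn0 hB1
end

section
/- Let d ≥ 1, f : ℝ^d → ℝ, and x ∈ ℝ^d. Suppose that for every ε > 0 there exists δ > 0 such that for all v₁, v₂, v₃ ∈ ℝ^d with v₁ + v₂ + v₃ = 0 and ‖v₁‖ + ‖v₂‖ + ‖v₃‖ = 1, and all h₁, h₂, h₃ ∈ (0, δ), one has |h₂h₃·f(x + h₁v₁) + h₁h₃·f(x + h₂v₂) + h₁h₂·f(x + h₃v₃) − (h₁h₂ + h₂h₃ + h₁h₃)·f(x)| ≤ ε·h₁·h₂·h₃. Then f is Fréchet differentiable at x. -/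
/-!
Dividing the hypothesis by `h₁ h₂ h₃` says that the difference quotients
`q v h = (f (x + h v) - f x) / h` (`lineSlope`) along a normalized zero-sum triple nearly
cancel, uniformly in the triple. The triples `(u, u, -2u)` show that `q u` is uniformly Cauchy
as `h → 0⁺`, so the one-sided directional derivatives `D v` (`rightLineDeriv`) exist and
`q u h → D u` uniformly on a sphere. Letting all `hᵢ → 0` gives `D v₁ + D v₂ + D v₃ = 0`
whenever `v₁ + v₂ + v₃ = 0`, which together with positive homogeneity makes `D` linear, and
the uniform convergence is Fréchet differentiability.
-/

open Filter Topology Set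

variable {E : Type*} [NormedAddCommGroup E] [NormedSpace ℝ E]

noncomputable def lineSlope (f : E → ℝ) (x v : E) (h : ℝ) : ℝ :=
  (f (x + h • v) - f x) / h

noncomputable def rightLineDeriv (f : E → ℝ) (x v : E) : ℝ :=
  limUnder (𝓝[>] 0) (lineSlope f x v)

def ThreePointCondition (f : E → ℝ) (x : E) : Prop :=
  ∀ ε > (0:ℝ), ∃ δ > (0:ℝ), ∀ v₁ v₂ v₃ : E,
    v₁ + v₂ + v₃ = 0 → ‖v₁‖ + ‖v₂‖ + ‖v₃‖ = 1 →
    ∀ h₁ h₂ h₃ : ℝ, h₁ ∈ Ioo 0 δ → h₂ ∈ Ioo 0 δ → h₃ ∈ Ioo 0 δ →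
      |h₂ * h₃ * f (x + h₁ • v₁) + h₁ * h₃ * f (x + h₂ • v₂) + h₁ * h₂ * f (x + h₃ • v₃) -
          (h₁ * h₂ + h₂ * h₃ + h₁ * h₃) * f x| ≤ ε * h₁ * h₂ * h₃

variable {f : E → ℝ} {x : E}

@[simp]
lemma lineSlope_zero : lineSlope f x 0 = 0 := by
  ext h
  simp [lineSlope]

lemma lineSlope_smul (c : ℝ) (v : E) (h : ℝ) :
    lineSlope f x (c • v) h = c * lineSlope f x v (c * h) := by
  rcases eq_or_ne c 0 with rfl | hc
  · simp [lineSlope]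
  · rw [lineSlope, lineSlope, smul_smul, mul_comm h c, mul_div_assoc', mul_div_mul_left _ _ hc]

lemma Filter.Tendsto.lineSlope_smul {v : E} {L c : ℝ} (hc : 0 < c)
    (hL : Tendsto (lineSlope f x v) (𝓝[>] 0) (𝓝 L)) :
    Tendsto (lineSlope f x (c • v)) (𝓝[>] 0) (𝓝 (c * L)) := by
  have hmul : Tendsto (c * ·) (𝓝[>] (0:ℝ)) (𝓝[>] 0) := by
    simpa using Filter.TendstoNhdsWithinIoi.const_mul hc (tendsto_id (x := 𝓝[>] (0:ℝ)))
  exact ((hL.comp hmul).const_mul c).congr fun h => (_root_.lineSlope_smul c v h).symm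

@[simp]
lemma rightLineDeriv_zero : rightLineDeriv f x 0 = 0 := by
  rw [rightLineDeriv, lineSlope_zero]
  exact tendsto_const_nhds.limUnder_eq

lemma norm_inv_four_mul_norm_smul {v : E} (hv : v ≠ 0) : ‖(4 * ‖v‖)⁻¹ • v‖ = 1 / 4 := by
  have hv' : 0 < ‖v‖ := norm_pos_iff.2 hv
  rw [norm_smul, norm_inv, Real.norm_of_nonneg (by positivity)]
  field_simp

namespace ThreePointCondition

variable (hf : ThreePointCondition f x)
include hf

lemma abs_sum_lineSlope_le : ∀ ε > (0:ℝ), ∃ δ > (0:ℝ), ∀ v₁ v₂ v₃ : E,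
    v₁ + v₂ + v₃ = 0 → ‖v₁‖ + ‖v₂‖ + ‖v₃‖ = 1 →
    ∀ h₁ ∈ Ioo 0 δ, ∀ h₂ ∈ Ioo 0 δ, ∀ h₃ ∈ Ioo 0 δ,
      |lineSlope f x v₁ h₁ + lineSlope f x v₂ h₂ + lineSlope f x v₃ h₃| ≤ ε := by
  intro ε hε
  obtain ⟨δ, hδ, H⟩ := hf ε hε
  refine ⟨δ, hδ, fun v₁ v₂ v₃ hsum hnorm h₁ hh₁ h₂ hh₂ h₃ hh₃ => ?_⟩
  have hpos : 0 < h₁ * h₂ * h₃ := mul_pos (mul_pos hh₁.1 hh₂.1) hh₃.1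
  have hscale : h₂ * h₃ * f (x + h₁ • v₁) + h₁ * h₃ * f (x + h₂ • v₂) +
      h₁ * h₂ * f (x + h₃ • v₃) - (h₁ * h₂ + h₂ * h₃ + h₁ * h₃) * f x
      = h₁ * h₂ * h₃ * (lineSlope f x v₁ h₁ + lineSlope f x v₂ h₂ + lineSlope f x v₃ h₃) := by
    simp only [lineSlope]
    field_simp [hh₁.1.ne', hh₂.1.ne', hh₃.1.ne']
    ring
  have key := H v₁ v₂ v₃ hsum hnorm h₁ h₂ h₃ hh₁ hh₂ hh₃
  rw [hscale, abs_mul, abs_of_pos hpos] at key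
  exact le_of_mul_le_mul_left (key.trans_eq (by ring)) hpos

lemma abs_lineSlope_sub_le : ∀ ε > (0:ℝ), ∃ δ > (0:ℝ), ∀ u : E, ‖u‖ = 1 / 4 →
    ∀ h ∈ Ioo 0 δ, ∀ h' ∈ Ioo 0 δ, |lineSlope f x u h - lineSlope f x u h'| ≤ ε := by
  intro ε hε
  obtain ⟨δ, hδ, H⟩ := hf.abs_sum_lineSlope_le (ε / 2) (half_pos hε)
  refine ⟨δ, hδ, fun u hu h hh h' hh' => ?_⟩
  have hsum : u + u + -((2:ℝ) • u) = 0 := by module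
  have hnorm : ‖u‖ + ‖u‖ + ‖-((2:ℝ) • u)‖ = 1 := by
    rw [norm_neg, norm_smul, hu]; norm_num
  have hmid : δ / 2 ∈ Ioo 0 δ := ⟨half_pos hδ, half_lt_self hδ⟩
  set S := fun t => lineSlope f x u t + lineSlope f x u (δ / 2) +
    lineSlope f x (-((2:ℝ) • u)) (δ / 2)
  calc |lineSlope f x u h - lineSlope f x u h'| = |S h - S h'| := by simp only [S]; ring_nf
    _ ≤ |S h| + |S h'| := abs_sub _ _
    _ ≤ ε / 2 + ε / 2 := add_le_add (H _ _ _ hsum hnorm _ hh _ hmid _ hmid)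
        (H _ _ _ hsum hnorm _ hh' _ hmid _ hmid)
    _ = ε := add_halves ε

lemma exists_tendsto_lineSlope_of_norm_eq {u : E} (hu : ‖u‖ = 1 / 4) :
    ∃ L, Tendsto (lineSlope f x u) (𝓝[>] 0) (𝓝 L) := by
  refine CompleteSpace.complete (Metric.cauchy_iff.2 ⟨map_neBot, fun ε hε => ?_⟩)
  obtain ⟨δ, hδ, H⟩ := hf.abs_lineSlope_sub_le (ε / 2) (half_pos hε)
  refine ⟨lineSlope f x u '' Ioo 0 δ, image_mem_map (Ioo_mem_nhdsGT hδ), ?_⟩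
  rintro _ ⟨h, hh, rfl⟩ _ ⟨h', hh', rfl⟩
  exact (H u hu h hh h' hh').trans_lt (half_lt_self hε)

lemma tendsto_lineSlope (v : E) :
    Tendsto (lineSlope f x v) (𝓝[>] 0) (𝓝 (rightLineDeriv f x v)) := by
  refine tendsto_nhds_limUnder ?_
  rcases eq_or_ne v 0 with rfl | hv
  · exact ⟨0, by rw [lineSlope_zero]; exact tendsto_const_nhds⟩
  have hc : 0 < 4 * ‖v‖ := by positivity
  obtain ⟨L, hL⟩ := hf.exists_tendsto_lineSlope_of_norm_eq (norm_inv_four_mul_norm_smul hv)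
  refine ⟨4 * ‖v‖ * L, ?_⟩
  simpa only [smul_smul, mul_inv_cancel₀ hc.ne', one_smul] using hL.lineSlope_smul hc

lemma rightLineDeriv_smul_of_pos {c : ℝ} (hc : 0 < c) (v : E) :
    rightLineDeriv f x (c • v) = c * rightLineDeriv f x v :=
  tendsto_nhds_unique (hf.tendsto_lineSlope _) ((hf.tendsto_lineSlope v).lineSlope_smul hc)

lemma rightLineDeriv_add_add_eq_zero_of_norm {v₁ v₂ v₃ : E} (hsum : v₁ + v₂ + v₃ = 0)
    (hnorm : ‖v₁‖ + ‖v₂‖ + ‖v₃‖ = 1) :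
    rightLineDeriv f x v₁ + rightLineDeriv f x v₂ + rightLineDeriv f x v₃ = 0 := by
  refine abs_nonpos_iff.1 (le_of_forall_pos_le_add fun ε hε => ?_)
  obtain ⟨δ, hδ, H⟩ := hf.abs_sum_lineSlope_le ε hε
  rw [zero_add]
  refine le_of_tendsto ((((hf.tendsto_lineSlope v₁).add (hf.tendsto_lineSlope v₂)).add
    (hf.tendsto_lineSlope v₃)).abs) ?_
  filter_upwards [Ioo_mem_nhdsGT hδ] with h hh
  exact H v₁ v₂ v₃ hsum hnorm h hh h hh h hh

lemma rightLineDeriv_add_add_eq_zero {v₁ v₂ v₃ : E} (hsum : v₁ + v₂ + v₃ = 0) :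
    rightLineDeriv f x v₁ + rightLineDeriv f x v₂ + rightLineDeriv f x v₃ = 0 := by
  set s := ‖v₁‖ + ‖v₂‖ + ‖v₃‖
  rcases (show 0 ≤ s by positivity).eq_or_lt with hs | hs
  · obtain ⟨rfl, rfl, rfl⟩ : v₁ = 0 ∧ v₂ = 0 ∧ v₃ = 0 := by
      refine ⟨?_, ?_, ?_⟩ <;> rw [← norm_eq_zero] <;>
        linarith [norm_nonneg v₁, norm_nonneg v₂, norm_nonneg v₃]
    simp
  have key := hf.rightLineDeriv_add_add_eq_zero_of_norm
    (v₁ := s⁻¹ • v₁) (v₂ := s⁻¹ • v₂) (v₃ := s⁻¹ • v₃)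
    (by rw [← smul_add, ← smul_add, hsum, smul_zero])
    (by simp only [norm_smul, norm_inv, Real.norm_of_nonneg hs.le, ← mul_add]
        exact inv_mul_cancel₀ hs.ne')
  simp only [hf.rightLineDeriv_smul_of_pos (inv_pos.2 hs), ← mul_add] at key
  exact (mul_eq_zero.1 key).resolve_left (inv_ne_zero hs.ne')

lemma rightLineDeriv_neg (v : E) : rightLineDeriv f x (-v) = -rightLineDeriv f x v := by
  have key := hf.rightLineDeriv_add_add_eq_zero (v₁ := v) (v₂ := -v) (v₃ := 0) (by simp)
  rw [rightLineDeriv_zero] at key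
  linarith

lemma rightLineDeriv_add (a b : E) :
    rightLineDeriv f x (a + b) = rightLineDeriv f x a + rightLineDeriv f x b := by
  have key := hf.rightLineDeriv_add_add_eq_zero (v₁ := a) (v₂ := b) (v₃ := -(a + b)) (by abel)
  rw [hf.rightLineDeriv_neg] at key
  linarith

lemma rightLineDeriv_smul (c : ℝ) (v : E) :
    rightLineDeriv f x (c • v) = c * rightLineDeriv f x v := by
  rcases lt_trichotomy c 0 with hc | rfl | hc
  · rw [← neg_smul_neg, hf.rightLineDeriv_smul_of_pos (neg_pos.2 hc), hf.rightLineDeriv_neg]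
    ring
  · simp
  · exact hf.rightLineDeriv_smul_of_pos hc v

noncomputable def rightLineDerivₗ : E →ₗ[ℝ] ℝ where
  toFun := rightLineDeriv f x
  map_add' := hf.rightLineDeriv_add
  map_smul' := hf.rightLineDeriv_smul

lemma abs_lineSlope_sub_rightLineDeriv_le : ∀ ε > (0:ℝ), ∃ δ > (0:ℝ), ∀ u : E, ‖u‖ = 1 / 4 →
    ∀ h ∈ Ioo 0 δ, |lineSlope f x u h - rightLineDeriv f x u| ≤ ε := by
  intro ε hε
  obtain ⟨δ, hδ, H⟩ := hf.abs_lineSlope_sub_le ε hε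
  refine ⟨δ, hδ, fun u hu h hh => ?_⟩
  refine le_of_tendsto (tendsto_const_nhds.sub (hf.tendsto_lineSlope u)).abs ?_
  filter_upwards [Ioo_mem_nhdsGT hδ] with h' hh' using H u hu h hh h' hh'

lemma isLittleO_rightLineDeriv :
    (fun w => f (x + w) - f x - rightLineDeriv f x w) =o[𝓝 0] fun w => w := by
  refine Asymptotics.isLittleO_iff.2 fun ε hε => ?_
  obtain ⟨δ, hδ, H⟩ := hf.abs_lineSlope_sub_rightLineDeriv_le (ε / 4) (by positivity)
  filter_upwards [Metric.ball_mem_nhds (0 : E) (by positivity : 0 < δ / 4)] with w hw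
  rw [mem_ball_zero_iff] at hw
  rcases eq_or_ne w 0 with rfl | hw0
  · simp
  have hu := norm_inv_four_mul_norm_smul hw0
  set h := 4 * ‖w‖
  have hh : 0 < h := by positivity
  have hdecomp : f (x + w) - f x - rightLineDeriv f x w
      = h * (lineSlope f x (h⁻¹ • w) h - rightLineDeriv f x (h⁻¹ • w)) := by
    conv_lhs => rw [← smul_inv_smul₀ hh.ne' w]
    rw [hf.rightLineDeriv_smul_of_pos hh, lineSlope, mul_sub, mul_div_cancel₀ _ hh.ne']
  rw [hdecomp, Real.norm_eq_abs, abs_mul, abs_of_pos hh]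
  calc h * |lineSlope f x (h⁻¹ • w) h - rightLineDeriv f x (h⁻¹ • w)|
      ≤ h * (ε / 4) := mul_le_mul_of_nonneg_left (H _ hu h ⟨hh, by linarith⟩) hh.le
    _ = ε * ‖w‖ := by ring

lemma hasFDerivAt [FiniteDimensional ℝ E] :
    HasFDerivAt f (LinearMap.toContinuousLinearMap hf.rightLineDerivₗ) x :=
  hasFDerivAt_iff_isLittleO_nhds_zero.2 hf.isLittleO_rightLineDeriv

end ThreePointCondition

theorem diff_criterion_higher_dim_general
    (d : ℕ)
    (f : EuclideanSpace ℝ (Fin d) → ℝ) (x : EuclideanSpace ℝ (Fin d))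
    (hyp : ∀ ε > (0:ℝ), ∃ δ > (0:ℝ),
      ∀ v₁ v₂ v₃ : EuclideanSpace ℝ (Fin d),
        v₁ + v₂ + v₃ = 0 → ‖v₁‖ + ‖v₂‖ + ‖v₃‖ = 1 →
        ∀ h₁ h₂ h₃ : ℝ, h₁ ∈ Set.Ioo 0 δ → h₂ ∈ Set.Ioo 0 δ → h₃ ∈ Set.Ioo 0 δ →
          |h₂ * h₃ * f (x + h₁ • v₁) + h₁ * h₃ * f (x + h₂ • v₂) +
              h₁ * h₂ * f (x + h₃ • v₃) -
              (h₁ * h₂ + h₂ * h₃ + h₁ * h₃) * f x| ≤ ε * h₁ * h₂ * h₃) :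
    DifferentiableAt ℝ f x :=
  (ThreePointCondition.hasFDerivAt hyp).differentiableAt

/-- Higher-dimensional differentiability criterion of §3.3. -/
theorem diff_criterion_higher_dim
    (d : ℕ) (hd : 1 ≤ d)
    (f : EuclideanSpace ℝ (Fin d) → ℝ) (x : EuclideanSpace ℝ (Fin d))
    (hyp : ∀ ε > (0:ℝ), ∃ δ > (0:ℝ),
      ∀ v₁ v₂ v₃ : EuclideanSpace ℝ (Fin d),
        v₁ + v₂ + v₃ = 0 → ‖v₁‖ + ‖v₂‖ + ‖v₃‖ = 1 →
        ∀ h₁ h₂ h₃ : ℝ, h₁ ∈ Set.Ioo 0 δ → h₂ ∈ Set.Ioo 0 δ → h₃ ∈ Set.Ioo 0 δ →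
          |h₂ * h₃ * f (x + h₁ • v₁) + h₁ * h₃ * f (x + h₂ • v₂) +
              h₁ * h₂ * f (x + h₃ • v₃) -
              (h₁ * h₂ + h₂ * h₃ + h₁ * h₃) * f x| ≤ ε * h₁ * h₂ * h₃) :
    DifferentiableAt ℝ f x :=
  diff_criterion_higher_dim_general d f x hyp
end

section
/- Let φ : ℝ² → ℝ² be a C^∞ map with φ(0,0) = (0,0) whose Fréchet derivative at the origin is the linear map (x,y) ↦ (2x, y/2), and suppose there is δ₀ > 0 such that φ maps {0} × (−δ₀, δ₀) into the y-axis {0} × ℝ. Let u : ℝ² → ℝ be continuous on a neighborhood U of the origin with u(0,0) = 0, and suppose u is slope-invariant under φ: for every p ∈ U with φ(p) ∈ U there exists s(p) ∈ ℝ such that (Dφ)(p)(1, u(p)) = s(p)·(1, u(φ(p))). Then for every ε ∈ (0,1) there exist K > 0 and δ > 0 such that |u(0,y)| ≤ K·|y|^{1−ε} for all y with |y| ≤ δ. -/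
open Set Filter

noncomputable def pG (φ : ℝ × ℝ → ℝ × ℝ) (y : ℝ) : ℝ := (φ (0, y)).2
noncomputable def pA (φ : ℝ × ℝ → ℝ × ℝ) (y : ℝ) : ℝ := (fderiv ℝ φ (0, y) (1, 0)).1
noncomputable def pB (φ : ℝ × ℝ → ℝ × ℝ) (y : ℝ) : ℝ := (fderiv ℝ φ (0, y) (1, 0)).2
noncomputable def pC (φ : ℝ × ℝ → ℝ × ℝ) (y : ℝ) : ℝ := (fderiv ℝ φ (0, y) (0, 1)).2

lemma iota_hasDerivAt (y : ℝ) : HasDerivAt (fun t : ℝ => ((0:ℝ), t)) ((0:ℝ), (1:ℝ)) y :=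
  (hasDerivAt_const y (0:ℝ)).prodMk (hasDerivAt_id y)

lemma phi_comp_hasDerivAt (φ : ℝ × ℝ → ℝ × ℝ) (hφ : ContDiff ℝ (⊤ : ℕ∞) φ) (y : ℝ) :
    HasDerivAt (fun t : ℝ => φ (0, t)) (fderiv ℝ φ (0, y) (0, 1)) y :=
  ((hφ.differentiable (by simp) _).hasFDerivAt).comp_hasDerivAt y (iota_hasDerivAt y)

lemma pG_hasDerivAt (φ : ℝ × ℝ → ℝ × ℝ) (hφ : ContDiff ℝ (⊤ : ℕ∞) φ) (y : ℝ) :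
    HasDerivAt (pG φ) (pC φ y) y :=
  (phi_comp_hasDerivAt φ hφ y).snd

lemma fderiv_comp_contDiff (φ : ℝ × ℝ → ℝ × ℝ) (hφ : ContDiff ℝ (⊤ : ℕ∞) φ) :
    ContDiff ℝ (⊤ : ℕ∞) (fun y : ℝ => fderiv ℝ φ (0, y)) :=
  (hφ.fderiv_right (by simp)).comp ((contDiff_const).prodMk contDiff_id)

lemma pB_contDiff (φ : ℝ × ℝ → ℝ × ℝ) (hφ : ContDiff ℝ (⊤ : ℕ∞) φ) :
    ContDiff ℝ (⊤ : ℕ∞) (pB φ) :=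
  contDiff_snd.comp ((fderiv_comp_contDiff φ hφ).clm_apply contDiff_const)

lemma pA_continuous (φ : ℝ × ℝ → ℝ × ℝ) (hφ : ContDiff ℝ (⊤ : ℕ∞) φ) :
    Continuous (pA φ) :=
  continuous_fst.comp (((fderiv_comp_contDiff φ hφ).continuous).clm_apply continuous_const)

lemma pC_continuous (φ : ℝ × ℝ → ℝ × ℝ) (hφ : ContDiff ℝ (⊤ : ℕ∞) φ) :
    Continuous (pC φ) :=
  continuous_snd.comp (((fderiv_comp_contDiff φ hφ).continuous).clm_apply continuous_const)

lemma eZero (φ : ℝ × ℝ → ℝ × ℝ) (hφ : ContDiff ℝ (⊤ : ℕ∞) φ) (δ₀ : ℝ)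
    (hstable : ∀ y : ℝ, |y| < δ₀ → (φ (0, y)).1 = 0)
    (y : ℝ) (hy : |y| < δ₀) : (fderiv ℝ φ (0, y) (0, 1)).1 = 0 := by
  have h1 : HasDerivAt (fun t : ℝ => (φ (0, t)).1) (fderiv ℝ φ (0, y) (0, 1)).1 y :=
    (phi_comp_hasDerivAt φ hφ y).fst
  have h2 : (fun t : ℝ => (φ (0, t)).1) =ᶠ[nhds y] fun _ => (0:ℝ) := by
    have : Ioo (-δ₀) δ₀ ∈ nhds y := by
      refine (isOpen_Ioo).mem_nhds ?_
      rw [mem_Ioo]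
      exact ⟨by linarith [neg_abs_le y], by linarith [le_abs_self y]⟩
    filter_upwards [this] with t ht
    exact hstable t (abs_lt.2 ⟨ht.1, ht.2⟩)
  have h3 : HasDerivAt (fun _ : ℝ => (0:ℝ)) (fderiv ℝ φ (0, y) (0, 1)).1 y :=
    h1.congr_of_eventuallyEq h2.symm
  exact h3.unique (hasDerivAt_const y 0)

lemma recursion (φ : ℝ × ℝ → ℝ × ℝ) (hφ : ContDiff ℝ (⊤ : ℕ∞) φ) (δ₀ : ℝ)
    (hstable : ∀ y : ℝ, |y| < δ₀ → (φ (0, y)).1 = 0)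
    (U : Set (ℝ × ℝ)) (u : ℝ × ℝ → ℝ)
    (hinv : ∀ p ∈ U, φ p ∈ U →
      ∃ s : ℝ, fderiv ℝ φ p (1, u p) = s • ((1, u (φ p)) : ℝ × ℝ))
    (y : ℝ) (hy : |y| < δ₀) (hyU : ((0:ℝ), y) ∈ U) (hyU2 : φ (0, y) ∈ U) :
    pA φ y * u (0, pG φ y) = pB φ y + pC φ y * u (0, y) := by
  obtain ⟨s, hs⟩ := hinv (0, y) hyU hyU2
  have hsplit : ((1:ℝ), u (0, y)) = (1, 0) + u (0, y) • ((0:ℝ), (1:ℝ)) := by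
    simp [Prod.ext_iff]
  have hlin : fderiv ℝ φ (0, y) (1, u (0, y))
      = fderiv ℝ φ (0, y) (1, 0) + u (0, y) • fderiv ℝ φ (0, y) (0, 1) := by
    rw [hsplit, map_add, map_smul]
  have hφy : φ (0, y) = (0, pG φ y) := by
    have := hstable y hy
    exact Prod.ext this rfl
  have hE := eZero φ hφ δ₀ hstable y hy
  rw [hlin, hφy] at hs
  have h1 : pA φ y = s := by
    have := congrArg Prod.fst hs
    simpa [pA, hE] using this
  have h2 : pB φ y + u (0, y) * pC φ y = s * u (0, pG φ y) := by
    have := congrArg Prod.snd hs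
    simpa [pB, pC] using this
  rw [← h1] at h2
  linarith [h2]

lemma surjIter (g : ℝ → ℝ) (hg : Continuous g) (r₀ lam : ℝ) (hr : 0 < r₀)
    (hlam : 0 < lam) (hlam1 : lam ≤ 1)
    (hlow : ∀ ρ : ℝ, 0 < ρ → ρ ≤ r₀ → g (-ρ) ≤ -(lam * ρ) ∧ lam * ρ ≤ g ρ) :
    ∀ n : ℕ, ∀ z : ℝ, |z| ≤ lam ^ n * r₀ → ∃ y, |y| ≤ r₀ ∧ g^[n] y = z := by
  intro n
  induction n with
  | zero => intro z hz; exact ⟨z, by simpa using hz, rfl⟩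
  | succ n ih =>
    intro z hz
    set ρ := lam ^ n * r₀ with hρdef
    have hρ : 0 < ρ := mul_pos (pow_pos hlam n) hr
    have hρr : ρ ≤ r₀ := by
      calc lam ^ n * r₀ ≤ 1 * r₀ := by
            apply mul_le_mul_of_nonneg_right _ hr.le
            exact pow_le_one₀ hlam.le hlam1
        _ = r₀ := one_mul r₀
    have hzρ : |z| ≤ lam * ρ := by
      rw [hρdef]
      calc |z| ≤ lam ^ (n+1) * r₀ := hz
        _ = lam * (lam ^ n * r₀) := by ring
    obtain ⟨hg1, hg2⟩ := hlow ρ hρ hρr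
    have hmem : z ∈ Icc (g (-ρ)) (g ρ) := by
      constructor
      · calc g (-ρ) ≤ -(lam * ρ) := hg1
          _ ≤ z := by have := neg_abs_le z; linarith [hzρ]
      · calc z ≤ |z| := le_abs_self z
          _ ≤ lam * ρ := hzρ
          _ ≤ g ρ := hg2
    have hsub := intermediate_value_Icc (show -ρ ≤ ρ by linarith) hg.continuousOn
    obtain ⟨w, hw, hgw⟩ := hsub hmem
    have hwρ : |w| ≤ ρ := abs_le.2 ⟨hw.1, hw.2⟩
    obtain ⟨y, hy, hgy⟩ := ih w hwρ
    refine ⟨y, hy, ?_⟩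
    rw [Function.iterate_succ_apply', hgy, hgw]

lemma exists_eta (ε : ℝ) (hε0 : 0 < ε) (hε1 : ε < 1) :
    ∃ η : ℝ, 0 < η ∧ η < 1/4 ∧ 1/2 + η ≤ ((1:ℝ)/2 - η) ^ (1 - ε) := by
  have h1 : ContinuousAt (fun η : ℝ => ((1:ℝ)/2 - η)) 0 :=
    (continuous_const.sub continuous_id).continuousAt
  have h2 : ContinuousAt (fun η : ℝ => ((1:ℝ)/2 - η) ^ (1 - ε)) 0 :=
    h1.rpow_const (Or.inr (by linarith))
  have hc : ContinuousAt (fun η : ℝ => ((1:ℝ)/2 - η) ^ (1 - ε) - (1/2 + η)) 0 :=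
    h2.sub (continuous_const.add continuous_id).continuousAt
  have hpos : (0:ℝ) < ((1:ℝ)/2 - 0) ^ (1 - ε) - (1/2 + 0) := by
    have : ((1:ℝ)/2) ^ (1:ℝ) < ((1:ℝ)/2) ^ (1 - ε) :=
      Real.rpow_lt_rpow_of_exponent_gt (by norm_num) (by norm_num) (by linarith)
    rw [Real.rpow_one] at this
    simpa using this
  have hev : ∀ᶠ η in nhds (0:ℝ), 0 < ((1:ℝ)/2 - η) ^ (1 - ε) - (1/2 + η) :=
    hc.eventually (eventually_gt_nhds hpos)
  rw [Metric.eventually_nhds_iff] at hev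
  obtain ⟨r, hr0, hr⟩ := hev
  refine ⟨min (r/2) (1/8), ?_, ?_, ?_⟩
  · positivity
  · calc min (r/2) (1/8) ≤ 1/8 := min_le_right _ _
      _ < 1/4 := by norm_num
  · have hlt : dist (min (r/2) (1/8)) 0 < r := by
      rw [Real.dist_eq, sub_zero, abs_of_pos (by positivity)]
      calc min (r/2) (1/8) ≤ r/2 := min_le_left _ _
        _ < r := by linarith
    have := hr hlt
    linarith

set_option maxHeartbeats 1000000 in
/-- Proposition 2.8 in concrete form: `(1-ε)`-Hölder continuity of the slope function
of the unstable distribution at the origin along the straightened stable manifold. -/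
theorem unstable_slope_holder
    (φ : ℝ × ℝ → ℝ × ℝ) (hφ_smooth : ContDiff ℝ (⊤ : ℕ∞) φ) (hφ0 : φ (0, 0) = (0, 0))
    (hdφ0 : ∀ v : ℝ × ℝ, fderiv ℝ φ (0, 0) v = (2 * v.1, v.2 / 2))
    (δ₀ : ℝ) (hδ₀ : 0 < δ₀)
    (hstable : ∀ y : ℝ, |y| < δ₀ → (φ (0, y)).1 = 0)
    (U : Set (ℝ × ℝ)) (hU : U ∈ nhds ((0, 0) : ℝ × ℝ))
    (u : ℝ × ℝ → ℝ) (hu_cont : ContinuousOn u U) (hu0 : u (0, 0) = 0)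
    (hinv : ∀ p ∈ U, φ p ∈ U →
      ∃ s : ℝ, fderiv ℝ φ p (1, u p) = s • ((1, u (φ p)) : ℝ × ℝ)) :
    ∀ ε ∈ Set.Ioo (0:ℝ) 1, ∃ K > (0:ℝ), ∃ δ > (0:ℝ),
      ∀ y : ℝ, |y| ≤ δ → |u (0, y)| ≤ K * |y| ^ (1 - ε) := by
  intro ε hε
  obtain ⟨hε0, hε1⟩ := hε
  obtain ⟨η, hη0, hη4, hηkey⟩ := exists_eta ε hε0 hε1
  set θ : ℝ := 1/2 + η with hθdef
  set lam : ℝ := 1/2 - η with hlamdef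
  set A : ℝ := 2 - η with hAdef
  have hθpos : 0 < θ := by rw [hθdef]; linarith
  have hθ1 : θ < 1 := by rw [hθdef]; linarith
  have hlam0 : 0 < lam := by rw [hlamdef]; linarith
  have hlam1 : lam < 1 := by rw [hlamdef]; linarith
  have hA1 : 1 < A := by rw [hAdef]; linarith
  have hA0 : 0 < A := by linarith
  -- values at the origin
  have hdA := hdφ0 (1, 0)
  have hdC := hdφ0 (0, 1)
  rw [Prod.ext_iff] at hdA hdC
  have hA2 : pA φ 0 = 2 := by rw [pA, hdA.1]; norm_num
  have hB0 : pB φ 0 = 0 := by rw [pB, hdA.2]; norm_num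
  have hC2 : pC φ 0 = 1/2 := by rw [pC, hdC.2]
  -- Lipschitz bound on pB near 0
  have hBcd : ContDiffAt ℝ 1 (pB φ) 0 :=
    ((pB_contDiff φ hφ_smooth).of_le (by simp)).contDiffAt
  obtain ⟨KB, t, ht, hlip⟩ := hBcd.exists_lipschitzOnWith
  set CB : ℝ := (KB : ℝ) + 1 with hCBdef
  have hCB0 : 0 < CB := by positivity
  have hEB : ∀ᶠ y in nhds (0:ℝ), |pB φ y| ≤ CB * |y| := by
    filter_upwards [ht] with y hyt
    have h0t : (0:ℝ) ∈ t := mem_of_mem_nhds ht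
    have hd := hlip.dist_le_mul y hyt 0 h0t
    rw [Real.dist_eq, Real.dist_eq, hB0, sub_zero, sub_zero] at hd
    calc |pB φ y| ≤ (KB : ℝ) * |y| := hd
      _ ≤ CB * |y| := by
          apply mul_le_mul_of_nonneg_right _ (abs_nonneg y)
          rw [hCBdef]; linarith
  -- eventual conditions near 0
  have hEU : ∀ᶠ y in nhds (0:ℝ), ((0:ℝ), y) ∈ U := by
    have hι : Continuous (fun y : ℝ => ((0:ℝ), y)) := continuous_const.prodMk continuous_id
    exact hι.continuousAt.preimage_mem_nhds hU
  have hEA : ∀ᶠ y in nhds (0:ℝ), A ≤ pA φ y := by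
    have hc : ContinuousAt (pA φ) 0 := (pA_continuous φ hφ_smooth).continuousAt
    have h2 : ∀ᶠ x in nhds (pA φ 0), A < x := by
      rw [hA2]; exact eventually_gt_nhds (by linarith)
    filter_upwards [hc.eventually h2] with y hy using hy.le
  have hEC : ∀ᶠ y in nhds (0:ℝ), |pC φ y - 1/2| < η := by
    have hc : ContinuousAt (pC φ) 0 := (pC_continuous φ hφ_smooth).continuousAt
    have h2 : ∀ᶠ x in nhds (pC φ 0), |x - 1/2| < η := by
      rw [hC2]
      filter_upwards [Metric.ball_mem_nhds (1/2 : ℝ) hη0] with x hx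
      rw [Metric.mem_ball, Real.dist_eq] at hx
      exact hx
    exact hc.eventually h2
  have hEδ : ∀ᶠ y in nhds (0:ℝ), |y| < δ₀ := by
    filter_upwards [Metric.ball_mem_nhds (0 : ℝ) hδ₀] with x hx
    rw [Metric.mem_ball, Real.dist_eq, sub_zero] at hx
    exact hx
  have hall := hEU.and (hEA.and (hEC.and (hEB.and hEδ)))
  rw [Metric.eventually_nhds_iff] at hall
  obtain ⟨r, hr0, hrP⟩ := hall
  set r₀ : ℝ := r/2 with hr₀def
  have hr₀0 : 0 < r₀ := by rw [hr₀def]; linarith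
  have hP : ∀ y : ℝ, |y| ≤ r₀ →
      (((0:ℝ), y) ∈ U ∧ A ≤ pA φ y ∧ |pC φ y - 1/2| < η ∧ |pB φ y| ≤ CB * |y| ∧ |y| < δ₀) := by
    intro y hy
    apply hrP
    rw [Real.dist_eq, sub_zero]
    calc |y| ≤ r₀ := hy
      _ < r := by rw [hr₀def]; linarith
  -- properties of g = pG φ
  have hgdiff : Differentiable ℝ (pG φ) := fun x => (pG_hasDerivAt φ hφ_smooth x).differentiableAt
  have hg0 : pG φ 0 = 0 := by rw [pG, hφ0]
  have hCbound : ∀ x : ℝ, |x| ≤ r₀ → |pC φ x| ≤ θ := by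
    intro x hx
    have := abs_lt.1 (hP x hx).2.2.1
    rw [hθdef]
    exact abs_le.2 ⟨by linarith [this.1], by linarith [this.2]⟩
  have hgcontr : ∀ y : ℝ, |y| ≤ r₀ → |pG φ y| ≤ θ * |y| := by
    intro y hy
    have hmem : y ∈ Icc (-r₀) r₀ := abs_le.1 hy
    have h0mem : (0:ℝ) ∈ Icc (-r₀) r₀ := ⟨by linarith, by linarith⟩
    have hmvt := Convex.norm_image_sub_le_of_norm_hasDerivWithin_le
      (f := pG φ) (f' := pC φ) (s := Icc (-r₀) r₀) (C := θ)
      (fun x hx => (pG_hasDerivAt φ hφ_smooth x).hasDerivWithinAt)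
      (fun x hx => by
        rw [Real.norm_eq_abs]
        exact hCbound x (abs_le.2 ⟨hx.1, hx.2⟩))
      (convex_Icc _ _) h0mem hmem
    rw [hg0, sub_zero, sub_zero, Real.norm_eq_abs, Real.norm_eq_abs] at hmvt
    exact hmvt
  have hglow : ∀ ρ : ℝ, 0 < ρ → ρ ≤ r₀ → pG φ (-ρ) ≤ -(lam * ρ) ∧ lam * ρ ≤ pG φ ρ := by
    intro ρ hρ hρr
    have hge : ∀ x ∈ interior (Icc (-r₀) r₀), lam ≤ deriv (pG φ) x := by
      intro x hx
      rw [interior_Icc] at hx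
      have hxr : |x| ≤ r₀ := le_of_lt (abs_lt.2 ⟨hx.1, hx.2⟩)
      have hCx := abs_lt.1 (hP x hxr).2.2.1
      rw [(pG_hasDerivAt φ hφ_smooth x).deriv, hlamdef]
      linarith [hCx.1]
    have key := (convex_Icc (-r₀) r₀).mul_sub_le_image_sub_of_le_deriv
      hgdiff.continuous.continuousOn hgdiff.differentiableOn hge
    constructor
    · have h := key (-ρ) ⟨by linarith, by linarith⟩ 0 ⟨by linarith, by linarith⟩ (by linarith)
      rw [hg0] at h
      have h2 : lam * (0 - -ρ) = lam * ρ := by ring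
      rw [h2, zero_sub] at h
      linarith
    · have h := key 0 ⟨by linarith, by linarith⟩ ρ ⟨by linarith, by linarith⟩ (by linarith)
      rw [hg0] at h
      have h2 : lam * (ρ - 0) = lam * ρ := by ring
      rw [h2, sub_zero] at h
      exact h
  -- bound M on u(0,·) over [-r₀, r₀]
  have hvcont : ContinuousOn (fun y : ℝ => u (0, y)) (Icc (-r₀) r₀) := by
    apply hu_cont.comp ((continuous_const.prodMk continuous_id).continuousOn)
    intro y hy
    exact (hP y (abs_le.2 ⟨hy.1, hy.2⟩)).1
  obtain ⟨M, hM⟩ := (isCompact_Icc (a := -r₀) (b := r₀)).exists_bound_of_continuousOn hvcont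
  have hMnn : 0 ≤ M := le_trans (norm_nonneg _) (hM 0 ⟨by linarith, by linarith⟩)
  have hMabs : ∀ y : ℝ, |y| ≤ r₀ → |u (0, y)| ≤ M := by
    intro y hy
    have := hM y (abs_le.1 hy)
    rwa [Real.norm_eq_abs] at this
  -- constants
  set q : ℝ := θ / A with hqdef
  set C' : ℝ := CB / (θ * (A - 1)) with hC'def
  have hq0 : 0 < q := div_pos hθpos hA0
  have hC'0 : 0 < C' := by
    apply div_pos hCB0
    apply mul_pos hθpos
    linarith
  -- key induction along the orbit
  have key : ∀ n : ℕ, ∀ y : ℝ, |y| ≤ r₀ →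
      |(pG φ)^[n] y| ≤ θ^n * |y| ∧ |u (0, (pG φ)^[n] y)| ≤ q^n * M + C' * θ^n * |y| := by
    intro n
    induction n with
    | zero =>
      intro y hy
      constructor
      · simp
      · simp only [Function.iterate_zero_apply, pow_zero, one_mul, mul_one]
        have h1 := hMabs y hy
        have h2 : 0 ≤ C' * |y| := mul_nonneg hC'0.le (abs_nonneg y)
        linarith
    | succ n ih =>
      intro y hy
      obtain ⟨ih1, ih2⟩ := ih y hy
      set w := (pG φ)^[n] y with hwdef
      have hθn1 : θ^n ≤ 1 := pow_le_one₀ hθpos.le hθ1.le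
      have hwy : |w| ≤ |y| := by
        calc |w| ≤ θ^n * |y| := ih1
          _ ≤ 1 * |y| := mul_le_mul_of_nonneg_right hθn1 (abs_nonneg y)
          _ = |y| := one_mul _
      have hwr : |w| ≤ r₀ := le_trans hwy hy
      have hPw := hP w hwr
      have hgw : |pG φ w| ≤ θ * |w| := hgcontr w hwr
      have hgwr : |pG φ w| ≤ r₀ := by
        calc |pG φ w| ≤ θ * |w| := hgw
          _ ≤ 1 * |w| := mul_le_mul_of_nonneg_right hθ1.le (abs_nonneg w)
          _ = |w| := one_mul _
          _ ≤ r₀ := hwr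
      have hφw : φ (0, w) = (0, pG φ w) := Prod.ext (hstable w hPw.2.2.2.2) rfl
      have hrec := recursion φ hφ_smooth δ₀ hstable U u hinv w hPw.2.2.2.2 hPw.1
        (by rw [hφw]; exact (hP _ hgwr).1)
      have hAw : A ≤ pA φ w := hPw.2.1
      have hAw0 : pA φ w ≠ 0 := ne_of_gt (lt_of_lt_of_le hA0 hAw)
      have hval : u (0, pG φ w) = (pB φ w + pC φ w * u (0, w)) / pA φ w := by
        rw [eq_div_iff hAw0]
        linarith [hrec]
      have hBw : |pB φ w| ≤ CB * |w| := hPw.2.2.2.1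
      have hCw : |pC φ w| ≤ θ := hCbound w hwr
      have hnum : |pB φ w + pC φ w * u (0, w)| ≤ CB * |w| + θ * |u (0, w)| := by
        calc |pB φ w + pC φ w * u (0, w)| ≤ |pB φ w| + |pC φ w * u (0, w)| := abs_add_le _ _
          _ = |pB φ w| + |pC φ w| * |u (0, w)| := by rw [abs_mul]
          _ ≤ CB * |w| + θ * |u (0, w)| :=
              add_le_add hBw (mul_le_mul_of_nonneg_right hCw (abs_nonneg _))
      have hAabs : A ≤ |pA φ w| := le_trans hAw (le_abs_self _)
      have hstep : |u (0, pG φ w)| ≤ (CB * |w| + θ * |u (0, w)|) / A := by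
        rw [hval, abs_div]
        exact div_le_div₀ (by positivity) hnum hA0 hAabs
      have hiter : (pG φ)^[n+1] y = pG φ w := by
        rw [Function.iterate_succ_apply', hwdef]
      constructor
      · rw [hiter]
        calc |pG φ w| ≤ θ * |w| := hgw
          _ ≤ θ * (θ^n * |y|) := mul_le_mul_of_nonneg_left ih1 hθpos.le
          _ = θ^(n+1) * |y| := by ring
      · rw [hiter]
        calc |u (0, pG φ w)| ≤ (CB * |w| + θ * |u (0, w)|) / A := hstep
          _ ≤ (CB * (θ^n * |y|) + θ * (q^n * M + C' * θ^n * |y|)) / A := by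
              apply (div_le_div_iff_of_pos_right hA0).2
              exact add_le_add (mul_le_mul_of_nonneg_left ih1 hCB0.le)
                (mul_le_mul_of_nonneg_left ih2 hθpos.le)
          _ = q^(n+1) * M + ((CB + θ * C') / A) * (θ^n * |y|) := by
              rw [hqdef]; ring
          _ = q^(n+1) * M + C' * θ^(n+1) * |y| := by
              have hθne : θ ≠ 0 := ne_of_gt hθpos
              have hAne : A ≠ 0 := ne_of_gt hA0
              have hA1ne : A - 1 ≠ 0 := by intro h; rw [sub_eq_zero] at h; exact absurd h.symm (ne_of_lt hA1)
              have hAC : (CB + θ * C') / A = C' * θ := by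
                rw [hC'def]
                field_simp
                ring
              rw [hAC]
              ring
  -- final assembly
  set β : ℝ := lam ^ (1 - ε) with hβdef
  have hβ0 : 0 < β := Real.rpow_pos_of_pos hlam0 _
  have hθβ : θ ≤ β := hηkey
  have hqβ : q ≤ β := by
    have : q ≤ θ := by
      rw [hqdef]
      exact div_le_self hθpos.le hA1.le
    linarith
  refine ⟨(M + C' * r₀ + 1) / (lam * r₀) ^ (1 - ε), ?_, lam * r₀, ?_, ?_⟩
  · apply div_pos (by positivity) (Real.rpow_pos_of_pos (by positivity) _)
  · positivity
  · intro z hz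
    rcases eq_or_ne z 0 with rfl | hz0
    · rw [abs_zero, Real.zero_rpow (by linarith : (1:ℝ) - ε ≠ 0), mul_zero]
      rw [show ((0:ℝ), (0:ℝ)) = ((0, 0) : ℝ × ℝ) from rfl, hu0, abs_zero]
    · have hz0' : 0 < |z| := abs_pos.2 hz0
      have hex : ∃ k : ℕ, lam ^ (k+1) * r₀ < |z| := by
        have htend : Tendsto (fun k : ℕ => lam ^ k) atTop (nhds 0) :=
          tendsto_pow_atTop_nhds_zero_of_lt_one hlam0.le hlam1
        have hev : ∀ᶠ k in atTop, lam ^ k < |z| / r₀ :=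
          htend.eventually (eventually_lt_nhds (by positivity))
        obtain ⟨k, hk⟩ := hev.exists
        refine ⟨k, ?_⟩
        calc lam ^ (k+1) * r₀ ≤ lam ^ k * r₀ := by
              apply mul_le_mul_of_nonneg_right _ hr₀0.le
              exact pow_le_pow_of_le_one hlam0.le hlam1.le (Nat.le_succ k)
          _ < |z| := (lt_div_iff₀ hr₀0).1 hk
      set m := Nat.find hex with hmdef
      have hm1 : lam ^ (m+1) * r₀ < |z| := Nat.find_spec hex
      have hm2 : |z| ≤ lam ^ m * r₀ := by
        rcases Nat.eq_zero_or_pos m with hm0 | hmpos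
        · rw [hm0, pow_zero, one_mul]
          calc |z| ≤ lam * r₀ := hz
            _ ≤ r₀ := mul_le_of_le_one_left hr₀0.le hlam1.le
        · have hmin := Nat.find_min hex (show m - 1 < m from Nat.sub_lt hmpos one_pos)
          rw [not_lt] at hmin
          have hms : m - 1 + 1 = m := Nat.succ_pred_eq_of_pos hmpos
          rwa [hms] at hmin
      obtain ⟨y, hyr, hgy⟩ := surjIter (pG φ) hgdiff.continuous r₀ lam hr₀0 hlam0 hlam1.le
        hglow m z hm2
      have hb := (key m y hyr).2
      rw [hgy] at hb
      have hβm : q^m * M + C' * θ^m * |y| ≤ (M + C' * r₀) * β^m := by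
        have h1 : q^m ≤ β^m := pow_le_pow_left₀ hq0.le hqβ m
        have h2 : θ^m ≤ β^m := pow_le_pow_left₀ hθpos.le hθβ m
        have h3 : |y| ≤ r₀ := hyr
        have h4 : C' * θ^m * |y| ≤ C' * β^m * r₀ := by
          apply mul_le_mul _ h3 (abs_nonneg y) (by positivity)
          exact mul_le_mul_of_nonneg_left h2 hC'0.le
        have h5 : q^m * M ≤ β^m * M := mul_le_mul_of_nonneg_right h1 hMnn
        have h6 : (M + C' * r₀) * β^m = β^m * M + C' * β^m * r₀ := by ring
        linarith
      have hβz : β ^ m ≤ |z| ^ (1-ε) / (lam * r₀) ^ (1-ε) := by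
        have hlm : lam ^ m ≤ |z| / (lam * r₀) := by
          rw [le_div_iff₀ (by positivity)]
          calc lam^m * (lam * r₀) = lam^(m+1) * r₀ := by ring
            _ ≤ |z| := hm1.le
        have h4 : β^m = (lam^m) ^ (1-ε) := by
          rw [hβdef, ← Real.rpow_natCast (lam ^ (1-ε)) m, ← Real.rpow_natCast lam m,
            ← Real.rpow_mul hlam0.le, ← Real.rpow_mul hlam0.le, mul_comm]
        rw [h4, ← Real.div_rpow (abs_nonneg z) (by positivity)]
        exact Real.rpow_le_rpow (pow_nonneg hlam0.le m) hlm (by linarith)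
      have hXnn : 0 ≤ |z| ^ (1-ε) := Real.rpow_nonneg (abs_nonneg z) _
      have hDpos : 0 < (lam * r₀) ^ (1-ε) := Real.rpow_pos_of_pos (by positivity) _
      calc |u (0, z)| ≤ q^m * M + C' * θ^m * |y| := hb
        _ ≤ (M + C' * r₀) * β^m := hβm
        _ ≤ (M + C' * r₀) * (|z|^(1-ε) / (lam * r₀)^(1-ε)) := by
            apply mul_le_mul_of_nonneg_left hβz (by positivity)
        _ ≤ (M + C' * r₀ + 1) / (lam * r₀) ^ (1-ε) * |z| ^ (1-ε) := by
            have e1 : (M + C' * r₀) * (|z|^(1-ε) / (lam * r₀)^(1-ε))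
                = ((M + C' * r₀) * |z|^(1-ε)) / (lam * r₀)^(1-ε) := (mul_div_assoc _ _ _).symm
            have e2 : (M + C' * r₀ + 1) / (lam * r₀)^(1-ε) * |z|^(1-ε)
                = ((M + C' * r₀ + 1) * |z|^(1-ε)) / (lam * r₀)^(1-ε) := div_mul_eq_mul_div _ _ _
            rw [e1, e2]
            exact (div_le_div_iff_of_pos_right hDpos).2
              (mul_le_mul_of_nonneg_right (by linarith) hXnn)
end

section
/- Let φ : ℝ² → ℝ² be a C^∞ map with φ(0,0) = (0,0) whose Fréchet derivative at the origin is the linear map (x,y) ↦ (2x, y/2), and suppose there is δ₀ > 0 such that φ maps {0} × (−δ₀, δ₀) into the y-axis {0} × ℝ. Let u : ℝ² → ℝ be continuous on a neighborhood U of the origin with u(0,0) = 0, and suppose u is slope-invariant under φ: for every p ∈ U with φ(p) ∈ U there exists s(p) ∈ ℝ such that (Dφ)(p)(1, u(p)) = s(p)·(1, u(φ(p))). Then the function y ↦ u(0, y) is differentiable at y = 0. -/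
open Filter Set Asymptotics
open scoped Topology ContDiff

set_option maxHeartbeats 2000000 in
/-- Proposition 2.15 in concrete form: differentiability of the slope function of the
unstable distribution at the origin along the straightened stable manifold. -/
theorem unstable_slope_differentiable
    (φ : ℝ × ℝ → ℝ × ℝ) (hφ_smooth : ContDiff ℝ (⊤ : ℕ∞) φ) (hφ0 : φ (0, 0) = (0, 0))
    (hdφ0 : ∀ v : ℝ × ℝ, fderiv ℝ φ (0, 0) v = (2 * v.1, v.2 / 2))
    (δ₀ : ℝ) (hδ₀ : 0 < δ₀)
    (hstable : ∀ y : ℝ, |y| < δ₀ → (φ (0, y)).1 = 0)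
    (U : Set (ℝ × ℝ)) (hU : U ∈ nhds ((0, 0) : ℝ × ℝ))
    (u : ℝ × ℝ → ℝ) (hu_cont : ContinuousOn u U) (hu0 : u (0, 0) = 0)
    (hinv : ∀ p ∈ U, φ p ∈ U →
      ∃ s : ℝ, fderiv ℝ φ p (1, u p) = s • ((1, u (φ p)) : ℝ × ℝ)) :
    DifferentiableAt ℝ (fun y : ℝ => u (0, y)) 0 := by
  have hemb : ContDiff ℝ (⊤ : ℕ∞) (fun y : ℝ => ((0:ℝ), y)) := contDiff_const.prodMk contDiff_id
  set A : ℝ → (ℝ × ℝ →L[ℝ] ℝ × ℝ) := fun y => fderiv ℝ φ (0, y) with hA_def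
  have hA : ContDiff ℝ (⊤ : ℕ∞) A := (hφ_smooth.fderiv_right (by simp)).comp hemb
  set a : ℝ → ℝ := fun y => (A y (1, 0)).1 with ha_def
  set c : ℝ → ℝ := fun y => (A y (1, 0)).2 with hc_def
  set d : ℝ → ℝ := fun y => (A y (0, 1)).2 with hd_def
  set g : ℝ → ℝ := fun y => (φ (0, y)).2 with hg_def
  have hA10 : ContDiff ℝ (⊤ : ℕ∞) (fun y => A y (1, 0)) := hA.clm_apply contDiff_const
  have hA01 : ContDiff ℝ (⊤ : ℕ∞) (fun y => A y (0, 1)) := hA.clm_apply contDiff_const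
  have ha : ContDiff ℝ (⊤ : ℕ∞) a := contDiff_fst.comp hA10
  have hc : ContDiff ℝ (⊤ : ℕ∞) c := contDiff_snd.comp hA10
  have hd : ContDiff ℝ (⊤ : ℕ∞) d := contDiff_snd.comp hA01
  have hg : ContDiff ℝ (⊤ : ℕ∞) g := contDiff_snd.comp (hφ_smooth.comp hemb)
  have hφdiff : Differentiable ℝ φ := hφ_smooth.differentiable (by simp)
  have hA0 : A 0 = fderiv ℝ φ (0, 0) := rfl
  have ha0 : a 0 = 2 := by
    show (A 0 (1, 0)).1 = 2
    rw [hA0, hdφ0 (1, 0)] <;> norm_num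
  have hc0 : c 0 = 0 := by
    show (A 0 (1, 0)).2 = 0
    rw [hA0, hdφ0 (1, 0)] <;> norm_num
  have hd0 : d 0 = 1 / 2 := by
    show (A 0 (0, 1)).2 = 1 / 2
    rw [hA0, hdφ0 (0, 1)] <;> norm_num
  have hg0 : g 0 = 0 := by show (φ (0, 0)).2 = 0; rw [hφ0]
  have hcurve : ∀ y : ℝ, HasDerivAt (fun t : ℝ => φ (0, t)) (A y (0, 1)) y := by
    intro y
    have h1 : HasDerivAt (fun t : ℝ => ((0:ℝ), t)) ((0:ℝ), (1:ℝ)) y :=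
      (hasDerivAt_const y (0:ℝ)).prodMk (hasDerivAt_id y)
    exact (hφdiff (0, y)).hasFDerivAt.comp_hasDerivAt y h1
  have hg' : ∀ y : ℝ, HasDerivAt g (d y) y := fun y =>
    (ContinuousLinearMap.snd ℝ ℝ ℝ).hasFDerivAt.comp_hasDerivAt y (hcurve y)
  have hb : ∀ y : ℝ, |y| < δ₀ → (A y (0, 1)).1 = 0 := by
    intro y hy
    have h1 : HasDerivAt (fun t : ℝ => (φ (0, t)).1) ((A y (0, 1)).1) y :=
      (ContinuousLinearMap.fst ℝ ℝ ℝ).hasFDerivAt.comp_hasDerivAt y (hcurve y)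
    have heq : (fun t : ℝ => (φ (0, t)).1) =ᶠ[𝓝 y] (fun _ => (0:ℝ)) := by
      filter_upwards [Ioo_mem_nhds (abs_lt.mp hy).1 (abs_lt.mp hy).2] with t ht
      exact hstable t (abs_lt.mpr ⟨ht.1, ht.2⟩)
    have h2 : HasDerivAt (fun _ : ℝ => (0:ℝ)) ((A y (0, 1)).1) y :=
      h1.congr_of_eventuallyEq heq.symm
    exact (h2.unique (hasDerivAt_const y 0))
  have hE : ∀ y : ℝ, ((0:ℝ), y) ∈ U → ((0:ℝ), g y) ∈ U → |y| < δ₀ →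
      c y + d y * u (0, y) = a y * u (0, g y) := by
    intro y h1 h2 h3
    have hφy : φ (0, y) = (0, g y) := Prod.ext (hstable y h3) rfl
    obtain ⟨s, hs⟩ := hinv (0, y) h1 (by rw [hφy]; exact h2)
    rw [hφy] at hs
    have hs' : A y ((1, 0) + u (0, y) • ((0:ℝ), (1:ℝ))) = s • ((1:ℝ), u (0, g y)) := by
      rw [← hs]; congr 1
      simp [Prod.ext_iff]
    rw [map_add, map_smul] at hs'
    have h4 := congrArg Prod.fst hs'
    have h5 := congrArg Prod.snd hs'
    simp only [Prod.fst_add, Prod.snd_add, Prod.smul_fst, Prod.smul_snd, smul_eq_mul] at h4 h5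
    rw [hb y h3, mul_zero, add_zero, mul_one] at h4
    rw [← h4] at h5
    show (A y (1, 0)).2 + (A y (0, 1)).2 * u (0, y) = (A y (1, 0)).1 * u (0, g y)
    linarith [h5]
  -- the quadratic error term
  set c' : ℝ := deriv c 0 with hc'_def
  set L : ℝ := 2 * c' with hL_def
  set P : ℝ → ℝ := fun y => c y + L * (d y * y - a y * g y) with hP_def
  have hP : ContDiff ℝ (⊤ : ℕ∞) P :=
    hc.add (contDiff_const.mul ((hd.mul contDiff_id).sub (ha.mul hg)))
  have hP0 : P 0 = 0 := by
    show c 0 + L * (d 0 * 0 - a 0 * g 0) = 0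
    rw [hc0, hg0]; ring
  have hcD : HasDerivAt c c' 0 := (hc.differentiable (by simp) 0).hasDerivAt
  have haD : HasDerivAt a (deriv a 0) 0 := (ha.differentiable (by simp) 0).hasDerivAt
  have hdD : HasDerivAt d (deriv d 0) 0 := (hd.differentiable (by simp) 0).hasDerivAt
  have hgD : HasDerivAt g (1 / 2) 0 := by have := hg' 0; rwa [hd0] at this
  have hPD : HasDerivAt P 0 0 := by
    have h1 := ((hdD.mul (hasDerivAt_id 0)).sub (haD.mul hgD)).const_mul L
    have h2 := hcD.add h1
    refine h2.congr_deriv ?_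
    simp only [id_eq, hg0, hd0, ha0, hL_def]
    ring
  have hq0 : deriv P 0 = 0 := hPD.deriv
  have hq : ContDiff ℝ (⊤ : ℕ∞) (deriv P) := by
    have h1 : deriv P = fun y => fderiv ℝ P y 1 := funext fun y => (fderiv_apply_one_eq_deriv).symm
    rw [h1]
    exact (hP.fderiv_right (by simp)).clm_apply contDiff_const
  have hqO := ((hq.differentiable (by simp)) 0).hasFDerivAt.isBigO_sub
  obtain ⟨C₁, hC₁⟩ := Asymptotics.isBigO_iff.mp hqO
  set C : ℝ := max C₁ 0 with hC_def
  have hCpos : 0 ≤ C := le_max_right _ _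
  have hP6 : ∀ᶠ y in 𝓝 (0:ℝ), |deriv P y| ≤ C * |y| := by
    filter_upwards [hC₁] with y hy
    rw [hq0, sub_zero, sub_zero, Real.norm_eq_abs, Real.norm_eq_abs] at hy
    exact hy.trans (mul_le_mul_of_nonneg_right (le_max_left _ _) (abs_nonneg y))
  have hP1 : ∀ᶠ y in 𝓝 (0:ℝ), ((0:ℝ), y) ∈ U := by
    have hcont : ContinuousAt (fun y : ℝ => ((0:ℝ), y)) 0 :=
      (continuous_const.prodMk continuous_id).continuousAt
    exact hcont.preimage_mem_nhds hU
  have hP2 : ∀ᶠ y in 𝓝 (0:ℝ), |y| < δ₀ := by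
    filter_upwards [Ioo_mem_nhds (neg_lt_zero.mpr hδ₀) hδ₀] with t ht
    exact abs_lt.mpr ⟨ht.1, ht.2⟩
  have hP3 : ∀ᶠ y in 𝓝 (0:ℝ), |d y - 1/2| < 1/100 := by
    have h1 : Tendsto (fun y => |d y - 1/2|) (𝓝 0) (𝓝 |d 0 - 1/2|) :=
      ((hd.continuous.sub continuous_const).abs.tendsto 0)
    rw [hd0, sub_self, abs_zero] at h1
    exact h1.eventually_lt_const (by norm_num)
  have hP4 : ∀ᶠ y in 𝓝 (0:ℝ), |a y - 2| < 1/10 := by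
    have h1 : Tendsto (fun y => |a y - 2|) (𝓝 0) (𝓝 |a 0 - 2|) :=
      ((ha.continuous.sub continuous_const).abs.tendsto 0)
    rw [ha0, sub_self, abs_zero] at h1
    exact h1.eventually_lt_const (by norm_num)
  have hP5 : ∀ᶠ y in 𝓝 (0:ℝ), |g y - y * (1/2)| ≤ |y| * (1/10) := by
    have h1 := hasDerivAt_iff_isLittleO.mp hgD
    rw [Asymptotics.isLittleO_iff] at h1
    filter_upwards [h1 (by norm_num : (0:ℝ) < 1/10)] with t ht
    simp only [hg0, sub_zero, smul_eq_mul, Real.norm_eq_abs] at ht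
    linarith [ht]
  obtain ⟨ε, hεpos, hε⟩ :=
    Metric.eventually_nhds_iff.mp (hP1.and (hP2.and (hP3.and (hP4.and (hP5.and hP6)))))
  set δ₁ : ℝ := ε / 2 with hδ₁_def
  have hδ₁pos : 0 < δ₁ := by positivity
  have hmem : ∀ y : ℝ, |y| ≤ δ₁ → (((0:ℝ), y) ∈ U ∧ |y| < δ₀ ∧ |d y - 1/2| < 1/100 ∧
      |a y - 2| < 1/10 ∧ |g y - y * (1/2)| ≤ |y| * (1/10) ∧ |deriv P y| ≤ C * |y|) := by
    intro y hy
    exact hε (by rw [Real.dist_eq, sub_zero]; calc |y| ≤ δ₁ := hy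
                                                 _ < ε := by rw [hδ₁_def]; linarith)
  have hPbound : ∀ y : ℝ, |y| ≤ δ₁ → |P y| ≤ C * y ^ 2 := by
    intro y hy
    have hbound : ∀ t ∈ Icc (-|y|) |y|, ‖deriv P t‖ ≤ C * |y| := by
      intro t ht
      have h2 : |t| ≤ |y| := abs_le.mpr ⟨ht.1, ht.2⟩
      have h3 := (hmem t (h2.trans hy)).2.2.2.2.2
      rw [Real.norm_eq_abs]
      exact h3.trans (mul_le_mul_of_nonneg_left h2 hCpos)
    have h1 := (convex_Icc (-|y|) |y|).norm_image_sub_le_of_norm_deriv_le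
      (fun t _ => hP.differentiable (by simp) t) hbound
      (⟨neg_nonpos.mpr (abs_nonneg y), abs_nonneg y⟩ : (0:ℝ) ∈ Icc (-|y|) |y|)
      ⟨neg_abs_le y, le_abs_self y⟩
    rw [hP0, sub_zero, sub_zero, Real.norm_eq_abs, Real.norm_eq_abs] at h1
    calc |P y| ≤ C * |y| * |y| := h1
    _ = C * y ^ 2 := by rw [mul_assoc, abs_mul_abs_self]; ring
  have hgle : ∀ y : ℝ, |y| ≤ δ₁ → |g y| ≤ (3/5) * |y| := by
    intro y hy
    have h1 := (hmem y hy).2.2.2.2.1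
    have h2 : |y * (1/2)| = |y| * (1/2) := by rw [abs_mul]; norm_num
    calc |g y| = |(g y - y * (1/2)) + y * (1/2)| := by ring_nf
    _ ≤ |g y - y * (1/2)| + |y * (1/2)| := abs_add_le _ _
    _ ≤ |y| * (1/10) + |y| * (1/2) := by rw [h2]; linarith
    _ = (3/5) * |y| := by ring
  set r : ℝ → ℝ := fun y => u (0, y) - L * y with hr_def
  have hr0 : r 0 = 0 := by show u (0, 0) - L * 0 = 0; rw [hu0]; ring
  have hEr : ∀ y : ℝ, |y| ≤ δ₁ → a y * r (g y) = d y * r y + P y := by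
    intro y hy
    have hgyδ : |g y| ≤ δ₁ := (hgle y hy).trans (by linarith [abs_nonneg y])
    have h0 := hE y (hmem y hy).1 (hmem (g y) hgyδ).1 (hmem y hy).2.1
    show a y * (u (0, g y) - L * g y) = d y * (u (0, y) - L * y) + (c y + L * (d y * y - a y * g y))
    linear_combination -h0
  -- bound on r
  have hrc : ContinuousOn r (Icc (-δ₁) δ₁) := by
    have h1 : ContinuousOn (fun y : ℝ => u (0, y)) (Icc (-δ₁) δ₁) := by
      apply hu_cont.comp ((continuous_const.prodMk continuous_id).continuousOn)
      intro y hy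
      exact (hmem y (abs_le.mpr ⟨hy.1, hy.2⟩)).1
    exact h1.sub ((continuous_const.mul continuous_id).continuousOn)
  obtain ⟨M₀, hM₀⟩ := isCompact_Icc.exists_bound_of_continuousOn hrc
  set M : ℝ := max M₀ 0 with hM_def
  have hM0 : 0 ≤ M := le_max_right _ _
  have hM : ∀ y : ℝ, |y| ≤ δ₁ → |r y| ≤ M := by
    intro y hy
    have := hM₀ y (abs_le.mp hy |> fun h => ⟨h.1, h.2⟩)
    rw [Real.norm_eq_abs] at this
    exact this.trans (le_max_left _ _)
  set K : ℝ := M + 17 * C * δ₁ ^ 2 with hK_def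
  have hK0 : 0 ≤ K := by positivity
  have hKM : M ≤ K := by nlinarith [hCpos, sq_nonneg δ₁]
  have hKC : C * δ₁ ^ 2 ≤ (6/100) * K := by nlinarith [hCpos, sq_nonneg δ₁, hM0]
  -- main induction
  have main : ∀ n : ℕ, ∀ y : ℝ, |y| ≤ δ₁ * (2/5) ^ n → |r y| ≤ K * (3/10) ^ n := by
    intro n
    induction n with
    | zero =>
      intro y hy
      simp only [pow_zero, mul_one] at hy ⊢
      exact (hM y hy).trans hKM
    | succ n ih =>
      intro y hy
      have hpow : (0:ℝ) < (2/5) ^ n := by positivity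
      have h25 : (5/2) * |y| ≤ δ₁ * (2/5) ^ n := by
        rw [pow_succ] at hy
        linarith
      have hp1 : ((2:ℝ)/5) ^ n ≤ 1 := pow_le_one₀ (by norm_num) (by norm_num)
      have hδn : δ₁ * (2/5) ^ n ≤ δ₁ := by nlinarith [hp1, hδ₁pos]
      obtain ⟨y', hy'abs, hgy'⟩ : ∃ y', |y'| ≤ (5/2) * |y| ∧ g y' = y := by
        rcases le_or_gt 0 y with hsgn | hsgn
        · have ht0 : (0:ℝ) ≤ (5/2) * y := by linarith
          have htabs : |(5/2) * y| = (5/2) * y := abs_of_nonneg ht0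
          have htδ : |(5/2) * y| ≤ δ₁ := by
            rw [htabs]
            rw [abs_of_nonneg hsgn] at h25
            linarith
          have hgt : y ≤ g ((5/2) * y) := by
            have h6 := (hmem ((5/2) * y) htδ).2.2.2.2.1
            rw [htabs] at h6
            have h7 := abs_le.mp h6
            nlinarith [h7.1]
          have hy_mem : y ∈ Icc (g 0) (g ((5/2) * y)) := ⟨by rw [hg0]; exact hsgn, hgt⟩
          obtain ⟨y', hy'mem, hgy'⟩ :=
            intermediate_value_Icc ht0 (hg.continuous.continuousOn) hy_mem
          refine ⟨y', ?_, hgy'⟩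
          rw [abs_of_nonneg hy'mem.1, abs_of_nonneg hsgn]
          exact hy'mem.2
        · have ht0 : (5/2) * y ≤ 0 := by linarith
          have htabs : |(5/2) * y| = (5/2) * (-y) := by rw [abs_of_nonpos ht0]; ring
          have htδ : |(5/2) * y| ≤ δ₁ := by
            rw [htabs]
            rw [abs_of_neg hsgn] at h25
            linarith
          have hgt : g ((5/2) * y) ≤ y := by
            have h6 := (hmem ((5/2) * y) htδ).2.2.2.2.1
            rw [htabs] at h6
            have h7 := abs_le.mp h6
            nlinarith [h7.2]
          have hy_mem : y ∈ Icc (g ((5/2) * y)) (g 0) := ⟨hgt, by rw [hg0]; linarith⟩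
          obtain ⟨y', hy'mem, hgy'⟩ :=
            intermediate_value_Icc ht0 (hg.continuous.continuousOn) hy_mem
          refine ⟨y', ?_, hgy'⟩
          rw [abs_of_nonpos (hy'mem.2), abs_of_neg hsgn]
          linarith [hy'mem.1]
      have hy'le : |y'| ≤ δ₁ * (2/5) ^ n := hy'abs.trans h25
      have hy'δ : |y'| ≤ δ₁ := hy'le.trans hδn
      have hih := ih y' hy'le
      have heq := hEr y' hy'δ
      rw [hgy'] at heq
      have hPb := hPbound y' hy'δ
      have hy'sq : y' ^ 2 ≤ (δ₁ * (2/5) ^ n) ^ 2 := by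
        nlinarith [abs_nonneg y', sq_abs y']
      have hd' : |d y'| ≤ 51/100 := by
        have h6 := (hmem y' hy'δ).2.2.1
        have h7 := abs_le.mp (le_of_lt h6)
        rw [abs_le]; constructor <;> linarith [h7.1, h7.2]
      have ha' : 19/10 ≤ |a y'| := by
        have h6 := (hmem y' hy'δ).2.2.2.1
        have h7 := abs_le.mp (le_of_lt h6)
        rw [le_abs]; left; linarith [h7.1]
      have hpown : ((4:ℝ)/25) ^ n ≤ (3/10) ^ n :=
        pow_le_pow_left₀ (by norm_num) (by norm_num) n
      have hsq' : (δ₁ * (2/5) ^ n) ^ 2 = δ₁ ^ 2 * (4/25) ^ n := by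
        rw [mul_pow, ← pow_mul, mul_comm n 2, pow_mul]
        norm_num
      have h3 : C * (δ₁ * (2/5) ^ n) ^ 2 ≤ (6/100) * (K * (3/10) ^ n) := by
        rw [hsq']
        calc C * (δ₁ ^ 2 * (4/25) ^ n) = (C * δ₁ ^ 2) * (4/25) ^ n := by ring
        _ ≤ ((6/100) * K) * (3/10) ^ n := by
            apply mul_le_mul hKC hpown (by positivity) (by positivity)
        _ = (6/100) * (K * (3/10) ^ n) := by ring
      have h1 : |a y' * r y| ≤ (51/100) * (K * (3/10) ^ n) + C * (δ₁ * (2/5) ^ n) ^ 2 := by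
        rw [heq]
        refine (abs_add_le _ _).trans ?_
        have hterm1 : |d y' * r y'| ≤ (51/100) * (K * (3/10) ^ n) := by
          rw [abs_mul]
          have := mul_le_mul hd' hih (abs_nonneg _) (by norm_num)
          linarith
        have hterm2 : |P y'| ≤ C * (δ₁ * (2/5) ^ n) ^ 2 :=
          hPb.trans (mul_le_mul_of_nonneg_left hy'sq hCpos)
        linarith
      have h2 : (19/10) * |r y| ≤ |a y' * r y| := by
        rw [abs_mul]
        exact mul_le_mul_of_nonneg_right ha' (abs_nonneg _)
      rw [pow_succ]
      linarith [h1, h2, h3]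
  -- conclusion: r = o(y)
  have hlittle : r =o[𝓝 (0:ℝ)] fun y => y := by
    rw [Asymptotics.isLittleO_iff]
    intro cc hcc
    obtain ⟨n₀, hn₀⟩ : ∃ n₀ : ℕ, K * (3/4) ^ n₀ * (5 / (2 * δ₁)) ≤ cc := by
      have h1 : Tendsto (fun n : ℕ => K * (3/4) ^ n * (5 / (2 * δ₁))) atTop
          (𝓝 (K * 0 * (5 / (2 * δ₁)))) :=
        (((tendsto_pow_atTop_nhds_zero_of_lt_one (by norm_num) (by norm_num)).const_mul
          K).mul_const _)
      rw [mul_zero, zero_mul] at h1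
      exact (h1.eventually (eventually_le_nhds hcc)).exists
    have hball : Metric.ball (0:ℝ) (δ₁ * (2/5) ^ (n₀ + 1)) ∈ 𝓝 (0:ℝ) :=
      Metric.ball_mem_nhds _ (by positivity)
    filter_upwards [hball] with y hy
    rw [Metric.mem_ball, Real.dist_eq, sub_zero] at hy
    rcases eq_or_ne y 0 with rfl | hy0
    · simp [hr0]
    · have hyabs : 0 < |y| := abs_pos.mpr hy0
      have hex : ∃ k : ℕ, δ₁ * (2/5) ^ (k + 1) < |y| := by
        obtain ⟨k, hk⟩ := exists_pow_lt_of_lt_one (div_pos hyabs hδ₁pos)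
          (by norm_num : (2:ℝ)/5 < 1)
        refine ⟨k, ?_⟩
        have h8 : ((2:ℝ)/5) ^ (k + 1) ≤ (2/5) ^ k :=
          pow_le_pow_of_le_one (by norm_num) (by norm_num) (Nat.le_succ k)
        have h9 : δ₁ * (2/5) ^ k < |y| := by
          rw [lt_div_iff₀ hδ₁pos] at hk
          linarith
        calc δ₁ * (2/5) ^ (k + 1) ≤ δ₁ * (2/5) ^ k :=
              mul_le_mul_of_nonneg_left h8 hδ₁pos.le
        _ < |y| := h9
      set n : ℕ := Nat.find hex with hn_def
      have hn1 : δ₁ * (2/5) ^ (n + 1) < |y| := Nat.find_spec hex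
      have hn₀le : n₀ + 1 ≤ n := by
        rw [hn_def, Nat.le_find_iff]
        intro k hk
        simp only [not_lt]
        have h8 : ((2:ℝ)/5) ^ (n₀ + 1) ≤ (2/5) ^ (k + 1) :=
          pow_le_pow_of_le_one (by norm_num) (by norm_num) (by omega)
        calc |y| ≤ δ₁ * (2/5) ^ (n₀ + 1) := hy.le
        _ ≤ δ₁ * (2/5) ^ (k + 1) := mul_le_mul_of_nonneg_left h8 hδ₁pos.le
      have hub : |y| ≤ δ₁ * (2/5) ^ n := by
        obtain ⟨m, hm⟩ : ∃ m, n = m + 1 := ⟨n - 1, by omega⟩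
        have h8 := Nat.find_min hex (m := m) (by omega)
        simp only [not_lt] at h8
        rw [hm]
        exact h8
      have hr_le := main n y hub
      have h2n : ((2:ℝ)/5) ^ n ≤ 5 / (2 * δ₁) * |y| := by
        rw [pow_succ] at hn1
        rw [div_mul_eq_mul_div, le_div_iff₀ (by positivity)]
        nlinarith
      have e3 : ((3:ℝ)/4) ^ n ≤ (3/4) ^ n₀ :=
        pow_le_pow_of_le_one (by norm_num) (by norm_num) (by omega)
      have hcomb : K * (3/10) ^ n ≤ K * (3/4) ^ n₀ * (5 / (2 * δ₁)) * |y| := by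
        have e1 : ((3:ℝ)/10) ^ n = (3/4) ^ n * (2/5) ^ n := by
          rw [← mul_pow]; norm_num
        calc K * (3/10) ^ n = K * ((3/4) ^ n * (2/5) ^ n) := by rw [e1]
        _ ≤ K * ((3/4) ^ n₀ * (5 / (2 * δ₁) * |y|)) := by
            apply mul_le_mul_of_nonneg_left _ hK0
            apply mul_le_mul e3 h2n (by positivity) (by positivity)
        _ = K * (3/4) ^ n₀ * (5 / (2 * δ₁)) * |y| := by ring
      rw [Real.norm_eq_abs, Real.norm_eq_abs]
      calc |r y| ≤ K * (3/10) ^ n := hr_le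
      _ ≤ K * (3/4) ^ n₀ * (5 / (2 * δ₁)) * |y| := hcomb
      _ ≤ cc * |y| := mul_le_mul_of_nonneg_right hn₀ (abs_nonneg y)
  -- conclude differentiability
  have hder : HasDerivAt (fun y : ℝ => u (0, y)) L 0 := by
    rw [hasDerivAt_iff_isLittleO]
    have heq : (fun y : ℝ => u (0, y) - u (0, 0) - (y - 0) • L) = r := by
      funext y
      show u (0, y) - u (0, 0) - (y - 0) • L = u (0, y) - L * y
      rw [hu0, smul_eq_mul]; ring
    rw [heq]
    have heq2 : (fun y : ℝ => y - 0) = fun y : ℝ => y := by funext y; ring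
    rw [heq2]
    exact hlittle
  exact hder.differentiableAt
end

section
/- Let φ : ℝ² → ℝ² be a C^∞ map with φ(0,0) = (0,0) whose Fréchet derivative at the origin is the linear map (x,y) ↦ (2x, y/2), and suppose there is δ₀ > 0 such that φ maps {0} × (−δ₀, δ₀) into the y-axis {0} × ℝ. Let u : ℝ² → ℝ be continuous on a neighborhood U of the origin with u(0,0) = 0, suppose u is slope-invariant under φ (for every p ∈ U with φ(p) ∈ U there exists s(p) ∈ ℝ such that (Dφ)(p)(1, u(p)) = s(p)·(1, u(φ(p)))), and suppose in addition that the function g(y) := u(0, y) is continuously differentiable on (−δ₀, δ₀). Then for every β ∈ (0,1) there exist K > 0 and δ > 0 such that |g'(y) − g'(0)| ≤ K·|y|^β for all y with |y| ≤ δ. -/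
open scoped ContDiff
open Set Filter

noncomputable def auxA (φ : ℝ × ℝ → ℝ × ℝ) (y : ℝ) : ℝ := (fderiv ℝ φ (0, y) (1, 0)).1
noncomputable def auxB (φ : ℝ × ℝ → ℝ × ℝ) (y : ℝ) : ℝ := (fderiv ℝ φ (0, y) (0, 1)).1
noncomputable def auxC (φ : ℝ × ℝ → ℝ × ℝ) (y : ℝ) : ℝ := (fderiv ℝ φ (0, y) (1, 0)).2
noncomputable def auxD (φ : ℝ × ℝ → ℝ × ℝ) (y : ℝ) : ℝ := (fderiv ℝ φ (0, y) (0, 1)).2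
noncomputable def auxPsi (φ : ℝ × ℝ → ℝ × ℝ) (y : ℝ) : ℝ := (φ (0, y)).2

noncomputable def auxQ (φ : ℝ × ℝ → ℝ × ℝ) (g : ℝ → ℝ) (y : ℝ) : ℝ :=
  (auxD φ y - auxB φ y * g (auxPsi φ y)) / ((auxA φ y + g y * auxB φ y) * auxD φ y)

noncomputable def auxF (φ : ℝ × ℝ → ℝ × ℝ) (g : ℝ → ℝ) (y : ℝ) : ℝ :=
  (deriv (auxC φ) y + g y * deriv (auxD φ) y
    - (deriv (auxA φ) y + g y * deriv (auxB φ) y) * g (auxPsi φ y))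
    / ((auxA φ y + g y * auxB φ y) * auxD φ y)

noncomputable def auxG (φ : ℝ × ℝ → ℝ × ℝ) (g : ℝ → ℝ) (h0 : ℝ) (y : ℝ) : ℝ :=
  auxF φ g y + h0 * auxQ φ g y

lemma aux_fderiv_smooth {φ : ℝ × ℝ → ℝ × ℝ} (hφ : ContDiff ℝ (⊤ : ℕ∞) φ) (v : ℝ × ℝ) :
    ContDiff ℝ ∞ (fun y : ℝ => fderiv ℝ φ (0, y) v) := by
  have h1 : ContDiff ℝ ∞ (fderiv ℝ φ) := hφ.fderiv_right (by simp)
  have h2 : ContDiff ℝ ∞ (fun y : ℝ => ((0 : ℝ), y)) := contDiff_const.prodMk contDiff_id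
  exact (h1.comp h2).clm_apply contDiff_const

lemma auxA_smooth {φ : ℝ × ℝ → ℝ × ℝ} (hφ : ContDiff ℝ (⊤ : ℕ∞) φ) : ContDiff ℝ ∞ (auxA φ) :=
  (aux_fderiv_smooth hφ (1, 0)).fst
lemma auxB_smooth {φ : ℝ × ℝ → ℝ × ℝ} (hφ : ContDiff ℝ (⊤ : ℕ∞) φ) : ContDiff ℝ ∞ (auxB φ) :=
  (aux_fderiv_smooth hφ (0, 1)).fst
lemma auxC_smooth {φ : ℝ × ℝ → ℝ × ℝ} (hφ : ContDiff ℝ (⊤ : ℕ∞) φ) : ContDiff ℝ ∞ (auxC φ) :=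
  (aux_fderiv_smooth hφ (1, 0)).snd
lemma auxD_smooth {φ : ℝ × ℝ → ℝ × ℝ} (hφ : ContDiff ℝ (⊤ : ℕ∞) φ) : ContDiff ℝ ∞ (auxD φ) :=
  (aux_fderiv_smooth hφ (0, 1)).snd
lemma auxPsi_smooth {φ : ℝ × ℝ → ℝ × ℝ} (hφ : ContDiff ℝ (⊤ : ℕ∞) φ) : ContDiff ℝ ∞ (auxPsi φ) :=
  ((hφ.of_le (by simp)).comp (contDiff_const.prodMk contDiff_id)).snd

lemma auxPsi_hasDerivAt {φ : ℝ × ℝ → ℝ × ℝ} (hφ : ContDiff ℝ (⊤ : ℕ∞) φ) (y : ℝ) :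
    HasDerivAt (auxPsi φ) (auxD φ y) y := by
  have h1 : HasDerivAt (fun t : ℝ => ((0 : ℝ), t)) ((0 : ℝ), (1 : ℝ)) y := by
    exact (ContinuousLinearMap.inr ℝ ℝ ℝ).hasDerivAt (x := y)
  have h2 : HasFDerivAt φ (fderiv ℝ φ (0, y)) (0, y) :=
    ((hφ.differentiable (by simp)) (0, y)).hasFDerivAt
  have h3 : HasDerivAt (fun t : ℝ => φ (0, t)) (fderiv ℝ φ (0, y) (0, 1)) y :=
    h2.comp_hasDerivAt y h1
  exact (ContinuousLinearMap.snd ℝ ℝ ℝ).hasFDerivAt.comp_hasDerivAt y h3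

lemma one_le_infty : (1 : WithTop ℕ∞) ≤ ∞ := by
  exact_mod_cast (le_top : (1:ℕ∞) ≤ ⊤)

set_option maxHeartbeats 4000000 in
/-- The proposition of §2.3 in concrete form: Hölder continuity of the derivative of the
slope function of the unstable distribution at the origin along the stable manifold. -/
theorem unstable_slope_derivative_holder
    (φ : ℝ × ℝ → ℝ × ℝ) (hφ_smooth : ContDiff ℝ (⊤ : ℕ∞) φ) (hφ0 : φ (0, 0) = (0, 0))
    (hdφ0 : ∀ v : ℝ × ℝ, fderiv ℝ φ (0, 0) v = (2 * v.1, v.2 / 2))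
    (δ₀ : ℝ) (hδ₀ : 0 < δ₀)
    (hstable : ∀ y : ℝ, |y| < δ₀ → (φ (0, y)).1 = 0)
    (U : Set (ℝ × ℝ)) (hU : U ∈ nhds ((0, 0) : ℝ × ℝ))
    (u : ℝ × ℝ → ℝ) (hu_cont : ContinuousOn u U) (hu0 : u (0, 0) = 0)
    (hinv : ∀ p ∈ U, φ p ∈ U →
      ∃ s : ℝ, fderiv ℝ φ p (1, u p) = s • ((1, u (φ p)) : ℝ × ℝ))
    (g : ℝ → ℝ) (hg : ∀ y : ℝ, g y = u (0, y))
    (hg_C1 : ContDiffOn ℝ 1 g (Set.Ioo (-δ₀) δ₀)) :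
    ∀ β ∈ Set.Ioo (0:ℝ) 1, ∃ K > (0:ℝ), ∃ δ > (0:ℝ),
      ∀ y : ℝ, |y| ≤ δ → |deriv g y - deriv g 0| ≤ K * |y| ^ β := by
  intro β hβ
  obtain ⟨hβ0, hβ1⟩ := hβ
  -- basic values at 0
  have hg0 : g 0 = 0 := by rw [hg]; exact hu0
  have hψ0 : auxPsi φ 0 = 0 := by
    show (φ (0, 0)).2 = 0
    rw [hφ0]
  have ha0 : auxA φ 0 = 2 := by
    show (fderiv ℝ φ (0, 0) (1, 0)).1 = 2
    rw [hdφ0]; norm_num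
  have hb0 : auxB φ 0 = 0 := by
    show (fderiv ℝ φ (0, 0) (0, 1)).1 = 0
    rw [hdφ0]; norm_num
  have hd0 : auxD φ 0 = 1/2 := by
    show (fderiv ℝ φ (0, 0) (0, 1)).2 = 1/2
    rw [hdφ0]
  -- smoothness
  have haS := auxA_smooth hφ_smooth
  have hbS := auxB_smooth hφ_smooth
  have hcS := auxC_smooth hφ_smooth
  have hdS := auxD_smooth hφ_smooth
  have hψS := auxPsi_smooth hφ_smooth
  have ha'S : ContDiff ℝ ∞ (deriv (auxA φ)) := (contDiff_infty_iff_deriv.mp haS).2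
  have hb'S : ContDiff ℝ ∞ (deriv (auxB φ)) := (contDiff_infty_iff_deriv.mp hbS).2
  have hc'S : ContDiff ℝ ∞ (deriv (auxC φ)) := (contDiff_infty_iff_deriv.mp hcS).2
  have hd'S : ContDiff ℝ ∞ (deriv (auxD φ)) := (contDiff_infty_iff_deriv.mp hdS).2
  have hψd : ∀ y, HasDerivAt (auxPsi φ) (auxD φ y) y := auxPsi_hasDerivAt hφ_smooth
  have hψcont : Continuous (auxPsi φ) := hψS.continuous
  -- differentiability of g inside Ioo (-δ₀) δ₀
  have hgdiff : ∀ y ∈ Ioo (-δ₀) δ₀, HasDerivAt g (deriv g y) y := by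
    intro y hy
    exact ((hg_C1.differentiableOn one_ne_zero).differentiableAt
      (isOpen_Ioo.mem_nhds hy)).hasDerivAt
  have hhcont : ContinuousOn (deriv g) (Ioo (-δ₀) δ₀) := by
    have h1 := hg_C1.continuousOn_derivWithin isOpen_Ioo.uniqueDiffOn le_rfl
    exact h1.congr fun x hx => (derivWithin_of_isOpen isOpen_Ioo hx).symm
  -- choice of ε
  obtain ⟨ε, hε0, hε8, hεkey⟩ :
      ∃ ε : ℝ, 0 < ε ∧ ε < 1/8 ∧ 1/2 + 2*ε ≤ (1/2 - ε) ^ β := by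
    have hhalf : (1/2 : ℝ) < (1/2 : ℝ) ^ β := by
      have := Real.rpow_lt_rpow_of_exponent_gt (x := (1/2:ℝ)) (by norm_num) (by norm_num) hβ1
      simpa using this
    have hcont : ContinuousAt (fun e : ℝ => ((1:ℝ)/2 - e) ^ β - 2*e) 0 := by
      have h1 : ContinuousAt (fun x : ℝ => x ^ β) ((1:ℝ)/2 - 0) :=
        Real.continuousAt_rpow_const _ _ (Or.inl (by norm_num))
      exact (h1.comp ((continuousAt_const).sub continuousAt_id)).sub
        ((continuousAt_const).mul continuousAt_id)
    have h2 : ∀ᶠ e in nhds (0:ℝ), (1:ℝ)/2 < ((1:ℝ)/2 - e) ^ β - 2*e := by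
      have h3 : Tendsto (fun e : ℝ => ((1:ℝ)/2 - e) ^ β - 2*e) (nhds 0)
          (nhds ((1/2 : ℝ) ^ β)) := by
        simpa using hcont.tendsto
      exact h3.eventually_const_lt (by simpa using hhalf)
    obtain ⟨η, hη0, hη⟩ := Metric.eventually_nhds_iff.mp h2
    refine ⟨min (η/2) (1/16), by positivity, ?_, ?_⟩
    · calc min (η/2) (1/16) ≤ 1/16 := min_le_right _ _
        _ < 1/8 := by norm_num
    · have hlt : dist (min (η/2) (1/16)) 0 < η := by
        rw [Real.dist_eq, sub_zero, abs_of_pos (by positivity)]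
        calc min (η/2) (1/16) ≤ η/2 := min_le_left _ _
          _ < η := by linarith
      have := hη hlt
      set e := min (η/2) (1/16)
      linarith
  obtain ⟨θ, hθdef⟩ : ∃ x : ℝ, x = 1/2 - ε := ⟨_, rfl⟩
  obtain ⟨q', hq'def⟩ : ∃ x : ℝ, x = 1/2 + 2*ε := ⟨_, rfl⟩
  have hεkey : q' ≤ θ ^ β := by rw [hθdef, hq'def]; linarith
  have hθ0 : 0 < θ := by simp only [hθdef]; linarith
  have hθ1 : θ < 1 := by simp only [hθdef]; linarith
  have hq'1 : q' < 1 := by simp only [hq'def]; linarith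
  have hθq' : θ ≤ q' := by simp only [hθdef, hq'def]; linarith
  have hq'0 : 0 < q' := by simp only [hq'def]; linarith
  -- the good neighborhood
  have h0mem : (0:ℝ) ∈ Ioo (-δ₀) δ₀ := ⟨by linarith, hδ₀⟩
  have hgat0 : ContinuousAt g 0 :=
    hg_C1.continuousOn.continuousAt (isOpen_Ioo.mem_nhds h0mem)
  have hcurve : Continuous (fun y : ℝ => ((0:ℝ), y)) := continuous_const.prodMk continuous_id
  have hev : ∀ᶠ y in nhds (0:ℝ),
      ((0:ℝ), y) ∈ U ∧ ((0:ℝ), auxPsi φ y) ∈ U ∧ |y| < δ₀ ∧ |auxPsi φ y| < δ₀ ∧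
        1 < |auxA φ y + g y * auxB φ y| ∧ (1:ℝ)/4 < auxD φ y := by
    have e1 : ∀ᶠ y in nhds (0:ℝ), ((0:ℝ), y) ∈ U :=
      hcurve.continuousAt.preimage_mem_nhds hU
    have e2 : ∀ᶠ y in nhds (0:ℝ), ((0:ℝ), auxPsi φ y) ∈ U := by
      refine (continuous_const.prodMk hψcont).continuousAt.preimage_mem_nhds ?_
      rw [hψ0]; exact hU
    have e3 : ∀ᶠ y in nhds (0:ℝ), |y| < δ₀ :=
      (continuous_abs.tendsto' 0 0 abs_zero).eventually_lt_const hδ₀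
    have e4 : ∀ᶠ y in nhds (0:ℝ), |auxPsi φ y| < δ₀ := by
      refine (Tendsto.eventually_lt_const hδ₀ ?_)
      exact (hψcont.abs.tendsto' 0 0 (by rw [hψ0, abs_zero]))
    have e5 : ∀ᶠ y in nhds (0:ℝ), 1 < |auxA φ y + g y * auxB φ y| := by
      have hc5 : ContinuousAt (fun y => |auxA φ y + g y * auxB φ y|) 0 :=
        (haS.continuous.continuousAt.add (hgat0.mul hbS.continuous.continuousAt)).abs
      have hval : |auxA φ 0 + g 0 * auxB φ 0| = 2 := by
        rw [ha0, hb0, hg0]; norm_num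
      have ht5 : Tendsto (fun y => |auxA φ y + g y * auxB φ y|) (nhds 0) (nhds 2) := by
        rw [← hval]; exact hc5.tendsto
      exact ht5.eventually_const_lt (by norm_num)
    have e6 : ∀ᶠ y in nhds (0:ℝ), (1:ℝ)/4 < auxD φ y := by
      have ht6 : Tendsto (auxD φ) (nhds 0) (nhds (1/2)) := by
        rw [← hd0]; exact hdS.continuous.continuousAt.tendsto
      exact ht6.eventually_const_lt (by norm_num)
    filter_upwards [e1, e2, e3, e4, e5, e6] with y h1 h2 h3 h4 h5 h6
    exact ⟨h1, h2, h3, h4, h5, h6⟩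
  obtain ⟨δ₁, hδ₁0, hP'⟩ := Metric.eventually_nhds_iff.mp hev
  have hP : ∀ y : ℝ, |y| < δ₁ →
      ((0:ℝ), y) ∈ U ∧ ((0:ℝ), auxPsi φ y) ∈ U ∧ |y| < δ₀ ∧ |auxPsi φ y| < δ₀ ∧
        1 < |auxA φ y + g y * auxB φ y| ∧ (1:ℝ)/4 < auxD φ y := by
    intro y hy
    exact hP' (by rwa [Real.dist_eq, sub_zero])
  -- the invariance equation along the stable manifold
  have hEq : ∀ y, |y| < δ₁ →
      auxC φ y + g y * auxD φ y = (auxA φ y + g y * auxB φ y) * g (auxPsi φ y) := by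
    intro y hy
    obtain ⟨hU1, hU2, hyδ0, hψδ0, hA1, hD4⟩ := hP y hy
    have hφy : φ (0, y) = (0, auxPsi φ y) := Prod.ext (hstable y hyδ0) rfl
    obtain ⟨s, hs⟩ := hinv (0, y) hU1 (by rw [hφy]; exact hU2)
    rw [hφy] at hs
    rw [← hg y, ← hg (auxPsi φ y)] at hs
    have hsplit : fderiv ℝ φ (0, y) (1, g y)
        = (auxA φ y + g y * auxB φ y, auxC φ y + g y * auxD φ y) := by
      have hv : ((1:ℝ), g y) = (1, 0) + g y • ((0:ℝ), (1:ℝ)) := by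
        simp [Prod.ext_iff]
      rw [hv, map_add, map_smul]
      simp [auxA, auxB, auxC, auxD, Prod.ext_iff, smul_eq_mul]
    rw [hsplit] at hs
    have h1 : auxA φ y + g y * auxB φ y = s := by
      have := congrArg Prod.fst hs; simpa using this
    have h2 : auxC φ y + g y * auxD φ y = s * g (auxPsi φ y) := by
      have := congrArg Prod.snd hs; simpa [smul_eq_mul] using this
    rw [← h1] at h2
    exact h2
  -- the key functional equation for the derivative
  have hKey : ∀ y, |y| < δ₁ →
      deriv g (auxPsi φ y) = auxQ φ g y * deriv g y + auxF φ g y := by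
    intro y hy
    obtain ⟨hU1, hU2, hyδ0, hψδ0, hA1, hD4⟩ := hP y hy
    have hymem : y ∈ Ioo (-δ₀) δ₀ := abs_lt.mp hyδ0
    have hψmem : auxPsi φ y ∈ Ioo (-δ₀) δ₀ := abs_lt.mp hψδ0
    have hga := hgdiff y hymem
    have hgψ := hgdiff _ hψmem
    have hcd : HasDerivAt (auxC φ) (deriv (auxC φ) y) y :=
      ((hcS.differentiable (by simp)) y).hasDerivAt
    have hdd : HasDerivAt (auxD φ) (deriv (auxD φ) y) y :=
      ((hdS.differentiable (by simp)) y).hasDerivAt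
    have had : HasDerivAt (auxA φ) (deriv (auxA φ) y) y :=
      ((haS.differentiable (by simp)) y).hasDerivAt
    have hbd : HasDerivAt (auxB φ) (deriv (auxB φ) y) y :=
      ((hbS.differentiable (by simp)) y).hasDerivAt
    have hlhs : HasDerivAt (fun t => auxC φ t + g t * auxD φ t)
        (deriv (auxC φ) y + (deriv g y * auxD φ y + g y * deriv (auxD φ) y)) y :=
      hcd.add (hga.mul hdd)
    have hgψcomp : HasDerivAt (fun t => g (auxPsi φ t))
        (deriv g (auxPsi φ y) * auxD φ y) y := hgψ.comp y (hψd y)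
    have hrhs : HasDerivAt (fun t => (auxA φ t + g t * auxB φ t) * g (auxPsi φ t))
        ((deriv (auxA φ) y + (deriv g y * auxB φ y + g y * deriv (auxB φ) y)) * g (auxPsi φ y)
          + (auxA φ y + g y * auxB φ y) * (deriv g (auxPsi φ y) * auxD φ y)) y :=
      (had.add (hga.mul hbd)).mul hgψcomp
    have heq : (fun t => auxC φ t + g t * auxD φ t) =ᶠ[nhds y]
        (fun t => (auxA φ t + g t * auxB φ t) * g (auxPsi φ t)) := by
      have hyI : y ∈ Ioo (-δ₁) δ₁ := abs_lt.mp hy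
      filter_upwards [isOpen_Ioo.mem_nhds hyI] with t ht
      exact hEq t (abs_lt.mpr ht)
    have hder := (hlhs.congr_of_eventuallyEq heq.symm).unique hrhs
    have hAne : auxA φ y + g y * auxB φ y ≠ 0 := by
      intro h; rw [h] at hA1; simp at hA1; linarith
    have hDne : auxD φ y ≠ 0 := by linarith
    rw [auxQ, auxF]
    rw [div_mul_eq_mul_div, ← add_div, eq_div_iff (mul_ne_zero hAne hDne)]
    linear_combination -hder
  -- value of G at 0
  have hG0 : auxG φ g (deriv g 0) 0 = deriv g 0 := by
    have hk0 := hKey 0 (by simpa using hδ₁0)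
    rw [hψ0] at hk0
    rw [auxG]
    linear_combination -hk0
  -- functional equation for H := deriv g - deriv g 0
  have hHeq : ∀ y, |y| < δ₁ → deriv g (auxPsi φ y) - deriv g 0 =
      auxQ φ g y * (deriv g y - deriv g 0) + (auxG φ g (deriv g 0) y - deriv g 0) := by
    intro y hy
    have hk := hKey y hy
    rw [auxG]
    linear_combination hk
  -- smoothness of Q and G on Ioo (-δ₁) δ₁
  have hI₁sub : Ioo (-δ₁) δ₁ ⊆ Ioo (-δ₀) δ₀ := fun t ht =>
    abs_lt.mp (hP t (abs_lt.mpr ht)).2.2.1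
  have hmaps : MapsTo (auxPsi φ) (Ioo (-δ₁) δ₁) (Ioo (-δ₀) δ₀) := fun t ht =>
    abs_lt.mp (hP t (abs_lt.mpr ht)).2.2.2.1
  have hgI : ContDiffOn ℝ 1 g (Ioo (-δ₁) δ₁) := hg_C1.mono hI₁sub
  have hgψI : ContDiffOn ℝ 1 (fun t => g (auxPsi φ t)) (Ioo (-δ₁) δ₁) :=
    hg_C1.comp (hψS.of_le one_le_infty).contDiffOn hmaps
  have hdenne : ∀ t ∈ Ioo (-δ₁) δ₁, (auxA φ t + g t * auxB φ t) * auxD φ t ≠ 0 := by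
    intro t ht
    have h5 := (hP t (abs_lt.mpr ht)).2.2.2.2.1
    have h6 := (hP t (abs_lt.mpr ht)).2.2.2.2.2
    refine mul_ne_zero (fun h => ?_) (by linarith)
    rw [h] at h5; simp at h5; linarith
  have hQC1 : ContDiffOn ℝ 1 (auxQ φ g) (Ioo (-δ₁) δ₁) := by
    show ContDiffOn ℝ 1 (fun y => (auxD φ y - auxB φ y * g (auxPsi φ y)) /
      ((auxA φ y + g y * auxB φ y) * auxD φ y)) (Ioo (-δ₁) δ₁)
    exact ContDiffOn.div
      (((hdS.of_le one_le_infty).contDiffOn).sub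
        (((hbS.of_le one_le_infty).contDiffOn).mul hgψI))
      ((((haS.of_le one_le_infty).contDiffOn).add
        (hgI.mul ((hbS.of_le one_le_infty).contDiffOn))).mul
        ((hdS.of_le one_le_infty).contDiffOn)) hdenne
  have hGC1 : ContDiffOn ℝ 1 (auxG φ g (deriv g 0)) (Ioo (-δ₁) δ₁) := by
    show ContDiffOn ℝ 1 (fun y => (deriv (auxC φ) y + g y * deriv (auxD φ) y
      - (deriv (auxA φ) y + g y * deriv (auxB φ) y) * g (auxPsi φ y))
      / ((auxA φ y + g y * auxB φ y) * auxD φ y) + deriv g 0 * auxQ φ g y) (Ioo (-δ₁) δ₁)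
    refine ContDiffOn.add (ContDiffOn.div ?_ ?_ hdenne) (contDiffOn_const.mul hQC1)
    · exact (((hc'S.of_le one_le_infty).contDiffOn).add
        (hgI.mul ((hd'S.of_le one_le_infty).contDiffOn))).sub
        ((((ha'S.of_le one_le_infty).contDiffOn).add
          (hgI.mul ((hb'S.of_le one_le_infty).contDiffOn))).mul hgψI)
    · exact (((haS.of_le one_le_infty).contDiffOn).add
        (hgI.mul ((hbS.of_le one_le_infty).contDiffOn))).mul
        ((hdS.of_le one_le_infty).contDiffOn)
  -- value of Q at 0
  have hQ0 : auxQ φ g 0 = 1/2 := by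
    rw [auxQ, hψ0, ha0, hb0, hd0, hg0]; norm_num
  have h0I₁ : (0:ℝ) ∈ Ioo (-δ₁) δ₁ := ⟨by linarith, hδ₁0⟩
  have hQcont0 : ContinuousAt (auxQ φ g) 0 :=
    hQC1.continuousOn.continuousAt (isOpen_Ioo.mem_nhds h0I₁)
  -- choose ρ
  have hevρ : ∀ᶠ t in nhds (0:ℝ), |auxQ φ g t| < 1/2 + ε ∧ θ < auxD φ t := by
    have f1 : ∀ᶠ t in nhds (0:ℝ), |auxQ φ g t| < 1/2 + ε := by
      have ht1 : Tendsto (fun t => |auxQ φ g t|) (nhds 0) (nhds (1/2)) := by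
        have := hQcont0.abs.tendsto
        rwa [hQ0, abs_of_pos (by norm_num)] at this
      exact ht1.eventually_lt_const (by linarith)
    have f2 : ∀ᶠ t in nhds (0:ℝ), θ < auxD φ t := by
      have ht2 : Tendsto (auxD φ) (nhds 0) (nhds (1/2)) := by
        rw [← hd0]; exact hdS.continuous.continuousAt.tendsto
      exact ht2.eventually_const_lt (by simp only [hθdef]; linarith)
    filter_upwards [f1, f2] with t h1 h2; exact ⟨h1, h2⟩
  obtain ⟨η₂, hη₂0, hη₂⟩ := Metric.eventually_nhds_iff.mp hevρ
  obtain ⟨ρ, hρdef⟩ : ∃ x : ℝ, x = min (η₂/2) (δ₁/2) := ⟨_, rfl⟩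
  have hρ0 : 0 < ρ := by rw [hρdef]; positivity
  have hρδ₁ : ρ < δ₁ := by
    rw [hρdef]
    calc min (η₂/2) (δ₁/2) ≤ δ₁/2 := min_le_right _ _
      _ < δ₁ := by linarith
  have hρbound : ∀ t : ℝ, |t| ≤ ρ → |auxQ φ g t| ≤ 1/2 + ε ∧ θ < auxD φ t := by
    intro t ht
    have : dist t 0 < η₂ := by
      rw [Real.dist_eq, sub_zero]
      calc |t| ≤ ρ := ht
        _ ≤ η₂/2 := by rw [hρdef]; exact min_le_left _ _
        _ < η₂ := by linarith
    exact ⟨(hη₂ this).1.le, (hη₂ this).2⟩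
  have hIccsub : Icc (-ρ) ρ ⊆ Ioo (-δ₁) δ₁ := fun t ht =>
    abs_lt.mp (lt_of_le_of_lt (abs_le.mpr ht) hρδ₁)
  -- Lipschitz bound for G near 0
  have hGderivcont : ContinuousOn (derivWithin (auxG φ g (deriv g 0)) (Ioo (-δ₁) δ₁))
      (Ioo (-δ₁) δ₁) := hGC1.continuousOn_derivWithin isOpen_Ioo.uniqueDiffOn le_rfl
  obtain ⟨L₀, hL₀⟩ := (isCompact_Icc (a := -ρ) (b := ρ)).exists_bound_of_continuousOn
    (hGderivcont.mono hIccsub)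
  obtain ⟨L, hLdef⟩ : ∃ x : ℝ, x = max L₀ 0 := ⟨_, rfl⟩
  have hL0 : 0 ≤ L := by rw [hLdef]; exact le_max_right _ _
  have hL₀L : L₀ ≤ L := by rw [hLdef]; exact le_max_left _ _
  have hGlip : ∀ t ∈ Icc (-ρ) ρ, |auxG φ g (deriv g 0) t - deriv g 0| ≤ L * |t| := by
    intro t ht
    have h0icc : (0:ℝ) ∈ Icc (-ρ) ρ := ⟨by linarith, hρ0.le⟩
    have hmvt := Convex.norm_image_sub_le_of_norm_hasDerivWithin_le
      (f := auxG φ g (deriv g 0))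
      (f' := fun x => derivWithin (auxG φ g (deriv g 0)) (Ioo (-δ₁) δ₁) x)
      (s := Icc (-ρ) ρ) (C := L) ?_ ?_ (convex_Icc _ _) h0icc ht
    · simp only [Real.norm_eq_abs, sub_zero, hG0] at hmvt
      exact hmvt
    · intro x hx
      have hxI := hIccsub hx
      have hdx : DifferentiableAt ℝ (auxG φ g (deriv g 0)) x :=
        (hGC1.differentiableOn one_ne_zero).differentiableAt (isOpen_Ioo.mem_nhds hxI)
      simp only [derivWithin_of_isOpen isOpen_Ioo hxI]
      exact hdx.hasDerivAt.hasDerivWithinAt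
    · intro x hx
      exact le_trans (hL₀ x hx) hL₀L
  -- bound for deriv g - deriv g 0 on the compact interval
  have hIccδ₀ : Icc (-ρ) ρ ⊆ Ioo (-δ₀) δ₀ := fun t ht => hI₁sub (hIccsub ht)
  obtain ⟨M₀, hM₀⟩ := (isCompact_Icc (a := -ρ) (b := ρ)).exists_bound_of_continuousOn
    ((hhcont.mono hIccδ₀).sub continuousOn_const (g := fun _ => deriv g 0))
  obtain ⟨M, hMdef⟩ : ∃ x : ℝ, x = max M₀ 0 := ⟨_, rfl⟩
  have hM0 : 0 ≤ M := by rw [hMdef]; exact le_max_right _ _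
  have hMb : ∀ t : ℝ, |t| ≤ ρ → |deriv g t - deriv g 0| ≤ M := by
    intro t ht
    have := hM₀ t (abs_le.mp ht)
    rw [Real.norm_eq_abs] at this
    exact le_trans this (by rw [hMdef]; exact le_max_left _ _)
  -- monotonicity and surjectivity of ψ near 0
  have hmono : MonotoneOn (fun t => auxPsi φ t - θ*t) (Icc (-ρ) ρ) := by
    apply monotoneOn_of_deriv_nonneg (convex_Icc _ _)
    · exact (hψcont.sub (continuous_const.mul continuous_id)).continuousOn
    · intro t ht
      exact ((hψd t).sub ((hasDerivAt_id t).const_mul θ)).differentiableAt.differentiableWithinAt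
    · intro t ht
      rw [interior_Icc] at ht
      have hD : HasDerivAt (fun t => auxPsi φ t - θ*t) (auxD φ t - θ) t := by
        have := (hψd t).sub ((hasDerivAt_id t).const_mul θ); rw [mul_one] at this; exact this
      rw [hD.deriv]
      have := (hρbound t (abs_le.mpr ⟨ht.1.le, ht.2.le⟩)).2
      linarith
  have hsurj : ∀ r : ℝ, 0 < r → r ≤ ρ → ∀ w : ℝ, |w| ≤ θ*r →
      ∃ t, |t| ≤ r ∧ auxPsi φ t = w := by
    intro r hr0 hrρ w hw
    have hrmem : r ∈ Icc (-ρ) ρ := ⟨by linarith, hrρ⟩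
    have hrmem' : -r ∈ Icc (-ρ) ρ := ⟨by linarith, by linarith⟩
    have h0mem' : (0:ℝ) ∈ Icc (-ρ) ρ := ⟨by linarith, hρ0.le⟩
    have hlow : θ*r ≤ auxPsi φ r := by
      have := hmono h0mem' hrmem hr0.le
      simp only [hψ0] at this
      linarith [this]
    have hup : auxPsi φ (-r) ≤ -(θ*r) := by
      have := hmono hrmem' h0mem' (by linarith)
      simp only [hψ0] at this
      linarith [this]
    have hivt := intermediate_value_Icc (by linarith : -r ≤ r) hψcont.continuousOn
    have hwmem : w ∈ Icc (auxPsi φ (-r)) (auxPsi φ r) := by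
      obtain ⟨hw1, hw2⟩ := abs_le.mp hw
      exact ⟨by linarith, by linarith⟩
    obtain ⟨t, htmem, hteq⟩ := hivt hwmem
    exact ⟨t, abs_le.mpr ⟨htmem.1, htmem.2⟩, hteq⟩
  -- the induction
  obtain ⟨D, hDdef⟩ : ∃ x : ℝ, x = L * ρ / ε := ⟨_, rfl⟩
  have hD0 : 0 ≤ D := by rw [hDdef]; positivity
  obtain ⟨K₁, hK₁def⟩ : ∃ x : ℝ, x = M + D := ⟨_, rfl⟩
  have hK₁0 : 0 ≤ K₁ := by rw [hK₁def]; positivity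
  have hind : ∀ n : ℕ, ∀ w : ℝ, |w| ≤ θ^n * ρ → |deriv g w - deriv g 0| ≤ K₁ * q'^n := by
    intro n
    induction n with
    | zero =>
      intro w hw
      rw [pow_zero, one_mul] at hw
      rw [pow_zero, mul_one]
      calc |deriv g w - deriv g 0| ≤ M := hMb w hw
        _ ≤ K₁ := by simp only [hK₁def]; linarith
    | succ n ih =>
      intro w hw
      have hθn1 : θ^n ≤ 1 := pow_le_one₀ hθ0.le hθ1.le
      have hr0 : 0 < θ^n * ρ := by positivity
      have hrρ : θ^n * ρ ≤ ρ := by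
        calc θ^n * ρ ≤ 1 * ρ := mul_le_mul_of_nonneg_right hθn1 hρ0.le
          _ = ρ := one_mul ρ
      have hw' : |w| ≤ θ * (θ^n * ρ) := by
        have hr : θ^(n+1)*ρ = θ*(θ^n*ρ) := by ring
        rwa [hr] at hw
      obtain ⟨t, htr, hteq⟩ := hsurj (θ^n*ρ) hr0 hrρ w hw'
      have htρ : |t| ≤ ρ := le_trans htr hrρ
      have htδ₁ : |t| < δ₁ := lt_of_le_of_lt htρ hρδ₁
      have hrec := hHeq t htδ₁
      rw [hteq] at hrec
      have h1 : |auxQ φ g t| ≤ 1/2 + ε := (hρbound t htρ).1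
      have h2 : |deriv g t - deriv g 0| ≤ K₁ * q'^n := ih t htr
      have h3 : |auxG φ g (deriv g 0) t - deriv g 0| ≤ L * (θ^n * ρ) := by
        have := hGlip t (abs_le.mp htρ)
        calc |auxG φ g (deriv g 0) t - deriv g 0| ≤ L * |t| := this
          _ ≤ L * (θ^n * ρ) := by
            exact mul_le_mul_of_nonneg_left htr hL0
      have hq'n : (0:ℝ) ≤ q'^n := pow_nonneg hq'0.le n
      have hq'θn : θ^n ≤ q'^n := pow_le_pow_left₀ hθ0.le hθq' n
      have hDε : D * ε = L * ρ := by
        rw [hDdef]; field_simp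
      calc |deriv g w - deriv g 0|
          = |auxQ φ g t * (deriv g t - deriv g 0) + (auxG φ g (deriv g 0) t - deriv g 0)| := by
            rw [hrec]
        _ ≤ |auxQ φ g t * (deriv g t - deriv g 0)| + |auxG φ g (deriv g 0) t - deriv g 0| :=
            abs_add_le _ _
        _ ≤ (1/2 + ε) * (K₁ * q'^n) + L * (θ^n * ρ) := by
            rw [abs_mul]
            have := mul_le_mul h1 h2 (abs_nonneg _) (by linarith)
            linarith [h3, this]
        _ ≤ K₁ * q'^(n+1) := by
            have e1 : L * (θ^n*ρ) ≤ (L*ρ) * q'^n := by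
              have : L * (θ^n*ρ) = (L*ρ) * θ^n := by ring
              rw [this]
              exact mul_le_mul_of_nonneg_left hq'θn (by positivity)
            have e2 : (L*ρ) * q'^n = D * ε * q'^n := by rw [hDε]
            have e3 : D * ε * q'^n ≤ K₁ * ε * q'^n := by
              have hDK : D ≤ K₁ := by simp only [hK₁def]; linarith
              have h4 : (0:ℝ) ≤ ε * q'^n := by positivity
              calc D * ε * q'^n = D * (ε * q'^n) := by ring
                _ ≤ K₁ * (ε * q'^n) := mul_le_mul_of_nonneg_right hDK h4
                _ = K₁ * ε * q'^n := by ring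
            have hgoal : K₁ * q'^(n+1) = (1/2+ε) * (K₁*q'^n) + K₁ * ε * q'^n := by
              rw [pow_succ, hq'def]; ring
            rw [hgoal]
            linarith
  -- conclusion
  have hθρβ : (0:ℝ) < (θ*ρ)^β := Real.rpow_pos_of_pos (by positivity) β
  refine ⟨K₁/(θ*ρ)^β + 1, by positivity, θ*ρ, by positivity, ?_⟩
  intro y hy
  by_cases hy0 : y = 0
  · subst hy0
    simp [Real.zero_rpow hβ0.ne']
  · have hyabs : 0 < |y| := abs_pos.mpr hy0
    have hex : ∃ m : ℕ, θ^m * ρ < |y| := by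
      obtain ⟨m, hm⟩ := exists_pow_lt_of_lt_one (show (0:ℝ) < |y|/ρ by positivity) hθ1
      exact ⟨m, (lt_div_iff₀ hρ0).mp hm⟩
    have hn₀ := Nat.find_spec hex
    have h0' : ¬(θ^0 * ρ < |y|) := by
      rw [pow_zero, one_mul]
      push_neg
      calc |y| ≤ θ*ρ := hy
        _ ≤ ρ := by nlinarith
    have h1' : ¬(θ^1 * ρ < |y|) := by
      rw [pow_one]; push_neg; exact hy
    have hn₀2 : 2 ≤ Nat.find hex := by
      have hne0 : Nat.find hex ≠ 0 := fun h => h0' (h ▸ hn₀)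
      have hne1 : Nat.find hex ≠ 1 := fun h => h1' (h ▸ hn₀)
      omega
    obtain ⟨n, hn⟩ : ∃ n, Nat.find hex = n + 1 := ⟨Nat.find hex - 1, by omega⟩
    have hupper : |y| ≤ θ^n * ρ := by
      have := Nat.find_min hex (m := n) (by omega)
      push_neg at this; exact this
    have hlower : θ^(n+1) * ρ < |y| := by rw [← hn]; exact hn₀
    have hH := hind n y hupper
    have s1 : q'^n ≤ (θ ^ β)^n := pow_le_pow_left₀ hq'0.le hεkey n
    have s2 : (θ^β)^n = ((θ^n : ℝ))^β := by
      rw [← Real.rpow_natCast (θ^β) n, ← Real.rpow_natCast θ n,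
        ← Real.rpow_mul hθ0.le, ← Real.rpow_mul hθ0.le, mul_comm]
    have s3 : ((θ^n : ℝ))^β = (θ^(n+1)*ρ)^β / (θ*ρ)^β := by
      rw [← Real.div_rpow (by positivity) (by positivity)]
      congr 1
      rw [eq_div_iff (by positivity)]
      ring
    have s4 : (θ^(n+1)*ρ)^β ≤ |y|^β := Real.rpow_le_rpow (by positivity) hlower.le hβ0.le
    have hyβ0 : (0:ℝ) ≤ |y|^β := Real.rpow_nonneg (abs_nonneg y) β
    calc |deriv g y - deriv g 0| ≤ K₁ * q'^n := hH
      _ ≤ K₁ * ((θ^(n+1)*ρ)^β / (θ*ρ)^β) := by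
          rw [← s3, ← s2]; exact mul_le_mul_of_nonneg_left s1 hK₁0
      _ ≤ K₁ * (|y|^β / (θ*ρ)^β) := by
          gcongr
      _ = (K₁/(θ*ρ)^β) * |y|^β := by ring
      _ ≤ (K₁/(θ*ρ)^β + 1) * |y|^β := by
          exact mul_le_mul_of_nonneg_right (by linarith) hyβ0
end
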